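/- arXiv:1803.06151 — 5 statements merged into one kernel-verified Lean document; each statement's English description precedes it below -/
import Mathlib

section
/- Let N ≥ 1 be an integer and λ > 0. If 0 < q ≤ N/(N+λ), then C_{N,λ,q} = 0; that is, for every ε > 0 there exists a nonnegative function ρ ∈ L^1 ∩ L^q(ℝ^N), ρ ≢ 0, such that I_λ[ρ] < ε (∫_{ℝ^N} ρ dx)^α (∫_{ℝ^N} ρ^q dx)^{(2−α)/q}. -/
open MeasureTheory ENNReal Filter Topology

noncomputable section

namespace RHLS

abbrev Space (N : ℕ) := EuclideanSpace ℝ (Fin N)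

/-- The interaction functional `I_λ[ρ] = ∬ ρ(x) |x-y|^λ ρ(y) dx dy`. -/
def I (N : ℕ) (lam : ℝ) (ρ : Space N → ℝ) : ℝ≥0∞ :=
  ∫⁻ x, ∫⁻ y, ENNReal.ofReal (ρ x) * ENNReal.ofReal (‖x - y‖ ^ lam) *
    ENNReal.ofReal (ρ y)

/-- `∫ ρ dx`. -/
def mass (N : ℕ) (ρ : Space N → ℝ) : ℝ≥0∞ := ∫⁻ x, ENNReal.ofReal (ρ x)

/-- `∫ ρ^q dx`. -/
def qnorm (N : ℕ) (q : ℝ) (ρ : Space N → ℝ) : ℝ≥0∞ :=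
  ∫⁻ x, ENNReal.ofReal (ρ x ^ q)

/-- `∫ |x|^λ ρ(x) dx`. -/
def mom (N : ℕ) (lam : ℝ) (ρ : Space N → ℝ) : ℝ≥0∞ :=
  ∫⁻ x, ENNReal.ofReal (‖x‖ ^ lam * ρ x)

/-- The exponent `α = (2N - q(2N+λ))/(N(1-q))`. -/
def alpha (N : ℕ) (lam q : ℝ) : ℝ :=
  (2 * (N : ℝ) - q * (2 * (N : ℝ) + lam)) / ((N : ℝ) * (1 - q))

/-- Admissible densities: measurable, nonnegative, in `L¹ ∩ L^q`, not a.e. zero. -/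
def Adm (N : ℕ) (q : ℝ) (ρ : Space N → ℝ) : Prop :=
  Measurable ρ ∧ 0 ≤ ρ ∧ mass N ρ < ⊤ ∧ qnorm N q ρ < ⊤ ∧
    ¬ ρ =ᵐ[(volume : Measure (Space N))] (0 : Space N → ℝ)

/-- The denominator `(∫ρ)^α (∫ρ^q)^{(2-α)/q}`. -/
def denom (N : ℕ) (lam q : ℝ) (ρ : Space N → ℝ) : ℝ≥0∞ :=
  mass N ρ ^ alpha N lam q * qnorm N q ρ ^ ((2 - alpha N lam q) / q)

/-- The quotient whose infimum is `C_{N,λ,q}`. -/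
def Qfun (N : ℕ) (lam q : ℝ) (ρ : Space N → ℝ) : ℝ≥0∞ :=
  I N lam ρ / denom N lam q ρ

/-- The optimal constant `C_{N,λ,q}`. -/
def C (N : ℕ) (lam q : ℝ) : ℝ≥0∞ :=
  sInf {c | ∃ ρ, Adm N q ρ ∧ c = Qfun N lam q ρ}

/-- The relaxed quotient `Q[ρ, M]`. -/
def Qrel (N : ℕ) (lam q : ℝ) (ρ : Space N → ℝ) (M : ℝ) : ℝ≥0∞ :=
  (I N lam ρ + 2 * ENNReal.ofReal M * mom N lam ρ) /
    ((mass N ρ + ENNReal.ofReal M) ^ alpha N lam q *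
      qnorm N q ρ ^ ((2 - alpha N lam q) / q))

/-- The relaxed optimal constant `C^rel_{N,λ,q}`. -/
def Crel (N : ℕ) (lam q : ℝ) : ℝ≥0∞ :=
  sInf {c | ∃ ρ M, Adm N q ρ ∧ 0 ≤ M ∧ c = Qrel N lam q ρ M}

/-- A minimizer `(ρ, M)` for the relaxed problem, with `I_λ[ρ]` and `∫|x|^λ ρ` finite. -/
def IsMinimizerRel (N : ℕ) (lam q : ℝ) (ρ : Space N → ℝ) (M : ℝ) : Prop :=
  Adm N q ρ ∧ 0 ≤ M ∧ I N lam ρ < ⊤ ∧ mom N lam ρ < ⊤ ∧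
    Qrel N lam q ρ M = Crel N lam q

/-- `ρ` is radially symmetric non-increasing. -/
def RadialNonincreasing (N : ℕ) (ρ : Space N → ℝ) : Prop :=
  ∃ φ : ℝ → ℝ, (∀ r s : ℝ, 0 ≤ r → r ≤ s → φ s ≤ φ r) ∧ ∀ x, ρ x = φ ‖x‖

end RHLS

/-
Test densities `ρ_K = 1_{B_1} + ∑_{k<K} h_k 1_{B_{2^{k+1}}}` with `h_k = K⁻¹ 2^{-(k+1)(N+λ)}`.
Each layer adds at most `ω/K` (`ω = |B_1|`) both to `∫ρ` and to `∫|x|^λ ρ`, so both stay below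
`2ω`, and `I_λ[ρ] ≤ 2^{λ+1} ∫ρ ∫|x|^λ ρ` stays bounded. On the shell `2^k ≤ |x| < 2^{k+1}`,
however, `ρ ≥ h_k`, and because `q(N+λ) ≤ N` every shell contributes at least `K^{-q} 2^{-N} ω`
to `∫ρ^q`. Hence `∫ρ^q ≥ K^{1-q} 2^{-N} ω → ∞` while `∫ρ ≥ ω`; since `α ≥ 0` and `(2-α)/q > 0`,
the denominator tends to `∞` and the quotient to `0`.
-/

open Metric

lemma MeasureTheory.Measure.addHaar_ball_le_addHaar_annulus {E : Type*} [NormedAddCommGroup E]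
    [NormedSpace ℝ E] [MeasurableSpace E] [BorelSpace E] [FiniteDimensional ℝ E] [Nontrivial E]
    (μ : Measure E) [μ.IsAddHaarMeasure] {r : ℝ} (hr : 0 ≤ r) :
    μ (ball 0 r) ≤ μ (norm ⁻¹' Set.Ico r (2 * r)) := by
  have hannulus : norm ⁻¹' Set.Ico r (2 * r) = ball (0 : E) (2 * r) \ ball 0 r := by
    ext x; simp [and_comm]
  have hdouble : 2 * μ (ball 0 r) ≤ μ (ball (0 : E) (2 * r)) := by
    rw [Measure.addHaar_ball_mul μ 0 zero_le_two]
    gcongr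
    rw [← ENNReal.ofReal_ofNat 2]
    exact ENNReal.ofReal_le_ofReal (le_self_pow₀ one_le_two Module.finrank_pos.ne')
  rw [hannulus, measure_sdiff (ball_subset_ball (by linarith)) measurableSet_ball.nullMeasurableSet
    measure_ball_lt_top.ne]
  exact ENNReal.le_sub_of_add_le_left measure_ball_lt_top.ne (by rwa [← two_mul])

lemma ENNReal.ofReal_norm_rpow {E : Type*} [SeminormedAddCommGroup E] {p : ℝ} (hp : 0 ≤ p)
    (x : E) : ENNReal.ofReal (‖x‖ ^ p) = ‖x‖ₑ ^ p := by
  rw [← ENNReal.ofReal_rpow_of_nonneg (norm_nonneg _) hp, ofReal_norm]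

lemma ENNReal.ofReal_norm_sub_rpow_le {E : Type*} [SeminormedAddCommGroup E] {p : ℝ}
    (hp : 0 ≤ p) (x y : E) : ENNReal.ofReal (‖x - y‖ ^ p) ≤ 2 ^ p * (‖x‖ₑ ^ p + ‖y‖ₑ ^ p) := by
  rw [ENNReal.ofReal_norm_rpow hp]
  calc ‖x - y‖ₑ ^ p ≤ (‖x‖ₑ + ‖y‖ₑ) ^ p := by gcongr; exact enorm_sub_le
    _ ≤ _ := ENNReal.add_rpow_le_two_rpow_mul_rpow_add_rpow _ _ hp

namespace RHLS

section

variable {N : ℕ} {lam q : ℝ}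

lemma volume_ball_eq_pow_mul (hN : 0 < N) {R : ℝ} (hR : 0 ≤ R) :
    volume (ball (0 : Space N) R) = ENNReal.ofReal (R ^ N) * volume (ball (0 : Space N) 1) := by
  have : Nonempty (Fin N) := ⟨⟨0, hN⟩⟩
  rw [Measure.addHaar_ball _ _ hR, finrank_euclideanSpace_fin]

lemma mom_eq_lintegral_enorm_rpow_mul (hlam : 0 ≤ lam) (ρ : Space N → ℝ) :
    mom N lam ρ = ∫⁻ x, ‖x‖ₑ ^ lam * ENNReal.ofReal (ρ x) := by
  refine lintegral_congr fun x => ?_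
  rw [ENNReal.ofReal_mul (by positivity), ENNReal.ofReal_norm_rpow hlam]

lemma I_le_two_rpow_mul_mass_mul_mom (hlam : 0 ≤ lam) {ρ : Space N → ℝ}
    (hρ : Measurable ρ) : I N lam ρ ≤ 2 ^ lam * (2 * mass N ρ * mom N lam ρ) := by
  have hf : Measurable fun x : Space N => ENNReal.ofReal (ρ x) := hρ.ennreal_ofReal
  have hg : Measurable fun x : Space N => ‖x‖ₑ ^ lam * ENNReal.ofReal (ρ x) :=
    (measurable_enorm.pow_const _).mul hf
  have htop : (2 : ℝ≥0∞) ^ lam ≠ ⊤ := ENNReal.rpow_ne_top_of_nonneg hlam (by simp)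
  calc I N lam ρ
      ≤ ∫⁻ x, ∫⁻ y, 2 ^ lam * (ENNReal.ofReal (ρ x) * (‖y‖ₑ ^ lam * ENNReal.ofReal (ρ y)) +
          ‖x‖ₑ ^ lam * ENNReal.ofReal (ρ x) * ENNReal.ofReal (ρ y)) := by
        refine lintegral_mono fun x => lintegral_mono fun y => ?_
        calc _ ≤ ENNReal.ofReal (ρ x) * (2 ^ lam * (‖x‖ₑ ^ lam + ‖y‖ₑ ^ lam)) *
              ENNReal.ofReal (ρ y) := by gcongr; exact ENNReal.ofReal_norm_sub_rpow_le hlam x y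
          _ = _ := by ring
    _ = ∫⁻ x, 2 ^ lam * (ENNReal.ofReal (ρ x) * mom N lam ρ +
          ‖x‖ₑ ^ lam * ENNReal.ofReal (ρ x) * mass N ρ) := by
        refine lintegral_congr fun x => ?_
        rw [lintegral_const_mul' _ _ htop, lintegral_add_left (hg.const_mul _),
          lintegral_const_mul _ hg, lintegral_const_mul _ hf, mom_eq_lintegral_enorm_rpow_mul hlam,
          mass]
    _ = 2 ^ lam * (2 * mass N ρ * mom N lam ρ) := by
        rw [lintegral_const_mul' _ _ htop, lintegral_add_left (hf.mul_const _),
          lintegral_mul_const _ hf, lintegral_mul_const _ hg,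
          ← mom_eq_lintegral_enorm_rpow_mul hlam, mass]
        ring

lemma mom_zero (ρ : Space N → ℝ) : mom N 0 ρ = mass N ρ := by
  simp [mom, mass]

lemma mom_add {f g : Space N → ℝ} (hf : Measurable f) (hf0 : 0 ≤ f) (hg0 : 0 ≤ g) :
    mom N lam (fun x => f x + g x) = mom N lam f + mom N lam g := by
  rw [mom, mom, mom, ← lintegral_add_left (by fun_prop)]
  refine lintegral_congr fun x => ?_
  rw [mul_add, ENNReal.ofReal_add (mul_nonneg (by positivity) (hf0 x))
    (mul_nonneg (by positivity) (hg0 x))]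

lemma mom_finset_sum {ι : Type*} (s : Finset ι) {f : ι → Space N → ℝ}
    (hf : ∀ i ∈ s, Measurable (f i)) (hf0 : ∀ i ∈ s, 0 ≤ f i) :
    mom N lam (fun x => ∑ i ∈ s, f i x) = ∑ i ∈ s, mom N lam (f i) := by
  simp only [mom]
  rw [← lintegral_finsetSum _ fun i hi => by have := hf i hi; fun_prop]
  refine lintegral_congr fun x => ?_
  rw [Finset.mul_sum, ENNReal.ofReal_sum_of_nonneg fun i hi =>
    mul_nonneg (by positivity) (hf0 i hi x)]

lemma mom_indicator_ball_le (hN : 0 < N) {μ R c : ℝ} (hμ : 0 ≤ μ) (hR : 0 < R) (hc : 0 ≤ c) :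
    mom N μ ((ball 0 R).indicator fun _ => c) ≤
      ENNReal.ofReal (c * R ^ ((N : ℝ) + μ)) * volume (ball (0 : Space N) 1) := by
  calc mom N μ ((ball 0 R).indicator fun _ => c)
      ≤ ∫⁻ x, (ball (0 : Space N) R).indicator (fun _ => ENNReal.ofReal (R ^ μ * c)) x := by
        refine lintegral_mono fun x => ?_
        by_cases hx : x ∈ ball (0 : Space N) R
        · rw [Set.indicator_of_mem hx, Set.indicator_of_mem hx]
          gcongr
          exact (mem_ball_zero_iff.mp hx).le
        · simp [Set.indicator_of_notMem hx]
    _ = ENNReal.ofReal (c * R ^ ((N : ℝ) + μ)) * volume (ball (0 : Space N) 1) := by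
        rw [lintegral_indicator_const measurableSet_ball, volume_ball_eq_pow_mul hN hR.le,
          ← mul_assoc, ← ENNReal.ofReal_mul (by positivity), Real.rpow_add hR, Real.rpow_natCast]
        ring_nf

lemma qnorm_lt_top_of_le_indicator (hq : 0 < q) {ρ : Space N → ℝ} (hρ : 0 ≤ ρ)
    {s : Set (Space N)} (hs : MeasurableSet s) (hs' : volume s ≠ ⊤) {M : ℝ}
    (h : ∀ x, ρ x ≤ s.indicator (fun _ => M) x) : qnorm N q ρ < ⊤ := by
  calc qnorm N q ρ ≤ ∫⁻ x, s.indicator (fun _ => ENNReal.ofReal (M ^ q)) x := by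
        refine lintegral_mono fun x => ?_
        by_cases hx : x ∈ s
        · have := h x
          rw [Set.indicator_of_mem hx] at this ⊢
          gcongr
          exact hρ x
        · have hρx : ρ x = 0 :=
            le_antisymm (by simpa [Set.indicator_of_notMem hx] using h x) (hρ x)
          simp [hρx, Real.zero_rpow hq.ne']
    _ < ⊤ := by
        rw [lintegral_indicator_const hs]
        exact ENNReal.mul_lt_top ENNReal.ofReal_lt_top hs'.lt_top

lemma alpha_nonneg (hq1 : q < 1) (hqN : q * (N + lam) ≤ N) :
    0 ≤ alpha N lam q := by
  unfold alpha
  exact div_nonneg (by nlinarith) (mul_nonneg (Nat.cast_nonneg N) (by linarith))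

lemma two_sub_alpha_div_pos (hN : 0 < N) (hlam : 0 < lam) (hq0 : 0 < q) (hq1 : q < 1) :
    0 < (2 - alpha N lam q) / q := by
  have hNq : (0 : ℝ) < N * (1 - q) := mul_pos (Nat.cast_pos.mpr hN) (by linarith)
  have h : 2 - alpha N lam q = q * lam / (N * (1 - q)) := by
    rw [alpha, eq_div_iff hNq.ne', sub_mul, div_mul_cancel₀ _ hNq.ne']
    ring
  rw [h]
  positivity

lemma C_eq_zero_of_forall_exists_lt
    (h : ∀ ε : ℝ, 0 < ε → ∃ ρ, Adm N q ρ ∧ I N lam ρ < ENNReal.ofReal ε * denom N lam q ρ) :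
    C N lam q = 0 := by
  refine nonpos_iff_eq_zero.mp (ENNReal.le_of_forall_pos_le_add fun ε hε _ => ?_)
  obtain ⟨ρ, hρ, hlt⟩ := h ε (NNReal.coe_pos.mpr hε)
  rw [zero_add, ← ENNReal.ofReal_coe_nnreal]
  have hC : C N lam q ≤ Qfun N lam q ρ := sInf_le ⟨ρ, hρ, rfl⟩
  exact hC.trans (ENNReal.div_lt_of_lt_mul hlt).le

lemma exists_I_lt_of_tendsto_denom {ρ : ℕ → Space N → ℝ} {A : ℝ≥0∞} (hA : A ≠ ⊤)
    (hI : ∀ K, I N lam (ρ K) ≤ A) (hdenom : Tendsto (fun K => denom N lam q (ρ K)) atTop (𝓝 ⊤))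
    {ε : ℝ} (hε : 0 < ε) : ∃ K, I N lam (ρ K) < ENNReal.ofReal ε * denom N lam q (ρ K) := by
  have hlim :=
    ENNReal.Tendsto.const_mul (a := ENNReal.ofReal ε) hdenom (Or.inr ENNReal.ofReal_ne_top)
  rw [ENNReal.mul_top (ENNReal.ofReal_pos.mpr hε).ne'] at hlim
  obtain ⟨K, hK⟩ := (hlim.eventually (lt_mem_nhds hA.lt_top)).exists
  exact ⟨K, (hI K).trans_lt hK⟩

end

def dyadicHeight (N : ℕ) (lam : ℝ) (K k : ℕ) : ℝ :=
  (K : ℝ)⁻¹ * ((2 : ℝ) ^ (k + 1)) ^ (-((N : ℝ) + lam))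

def dyadicStack (N : ℕ) (lam : ℝ) (K : ℕ) : Space N → ℝ := fun x =>
  (ball 0 1).indicator (fun _ => 1) x +
    ∑ k ∈ Finset.range K,
      (ball 0 ((2 : ℝ) ^ (k + 1))).indicator (fun _ => dyadicHeight N lam K k) x

section

variable {N : ℕ} {lam q : ℝ} {K : ℕ}

lemma dyadicHeight_nonneg (k : ℕ) : 0 ≤ dyadicHeight N lam K k := by
  unfold dyadicHeight; positivity

lemma dyadicHeight_mul_rpow_le {μ : ℝ} (hμ : μ ≤ lam) (k : ℕ) :
    dyadicHeight N lam K k * ((2 : ℝ) ^ (k + 1)) ^ ((N : ℝ) + μ) ≤ (K : ℝ)⁻¹ := by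
  have hR : (1 : ℝ) ≤ 2 ^ (k + 1) := one_le_pow₀ one_le_two
  rw [dyadicHeight, mul_assoc, ← Real.rpow_add (by positivity)]
  exact mul_le_of_le_one_right (by positivity)
    (Real.rpow_le_one_of_one_le_of_nonpos hR (by linarith))

lemma le_dyadicHeight_rpow_mul (hqN : q * (N + lam) ≤ N) (k : ℕ) :
    (K : ℝ) ^ (-q) / 2 ^ N ≤ dyadicHeight N lam K k ^ q * ((2 : ℝ) ^ k) ^ N := by
  have hR : (1 : ℝ) ≤ 2 ^ (k + 1) := one_le_pow₀ one_le_two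
  have hdecay :
      ((2 : ℝ) ^ (k + 1)) ^ (-(N : ℝ)) ≤ ((2 : ℝ) ^ (k + 1)) ^ (-((N : ℝ) + lam) * q) :=
    Real.rpow_le_rpow_of_exponent_le hR (by linarith)
  have hsplit : ((2 : ℝ) ^ (k + 1)) ^ (-(N : ℝ)) * ((2 : ℝ) ^ k) ^ N = (2 ^ N)⁻¹ := by
    rw [Real.rpow_neg (by positivity), Real.rpow_natCast, pow_succ, mul_pow]
    field_simp
  rw [dyadicHeight, Real.mul_rpow (by positivity) (by positivity),
    Real.inv_rpow (Nat.cast_nonneg K), ← Real.rpow_neg (Nat.cast_nonneg K),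
    ← Real.rpow_mul (by positivity), div_eq_mul_inv, ← hsplit, mul_assoc]
  gcongr

lemma measurable_dyadicStack : Measurable (dyadicStack N lam K) :=
  (measurable_const.indicator measurableSet_ball).add
    (Finset.measurable_sum _ fun _ _ => measurable_const.indicator measurableSet_ball)

lemma dyadicStack_nonneg : 0 ≤ dyadicStack N lam K := fun _ =>
  add_nonneg (Set.indicator_nonneg (fun _ _ => zero_le_one) _)
    (Finset.sum_nonneg fun k _ => Set.indicator_nonneg (fun _ _ => dyadicHeight_nonneg k) _)

lemma one_le_dyadicStack {x : Space N} (hx : x ∈ ball 0 1) : 1 ≤ dyadicStack N lam K x := by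
  rw [dyadicStack, Set.indicator_of_mem hx]
  exact le_add_of_nonneg_right
    (Finset.sum_nonneg fun k _ => Set.indicator_nonneg (fun _ _ => dyadicHeight_nonneg k) _)

lemma dyadicHeight_le_dyadicStack {k : ℕ} (hk : k < K) {x : Space N}
    (hx : x ∈ ball 0 ((2 : ℝ) ^ (k + 1))) : dyadicHeight N lam K k ≤ dyadicStack N lam K x := by
  rw [dyadicStack]
  refine le_add_of_nonneg_of_le (Set.indicator_nonneg (fun _ _ => zero_le_one) _) ?_
  rw [← Set.indicator_of_mem hx fun _ => dyadicHeight N lam K k]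
  exact Finset.single_le_sum (f := fun k => (ball 0 ((2 : ℝ) ^ (k + 1))).indicator _ x)
    (fun k _ => Set.indicator_nonneg (fun _ _ => dyadicHeight_nonneg k) _)
    (Finset.mem_range.mpr hk)

lemma dyadicStack_le_indicator (x : Space N) :
    dyadicStack N lam K x ≤
      (ball 0 ((2 : ℝ) ^ K)).indicator
        (fun _ => 1 + ∑ k ∈ Finset.range K, dyadicHeight N lam K k) x := by
  by_cases hx : x ∈ ball (0 : Space N) (2 ^ K)
  · rw [Set.indicator_of_mem hx, dyadicStack]
    gcongr with k
    · exact Set.indicator_apply_le' (fun _ => le_rfl) fun _ => zero_le_one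
    · exact Set.indicator_apply_le' (fun _ => le_rfl) fun _ => dyadicHeight_nonneg k
  · have hsub : ∀ {r : ℝ}, r ≤ 2 ^ K → x ∉ ball 0 r :=
      fun hr hxr => hx (ball_subset_ball hr hxr)
    rw [Set.indicator_of_notMem hx, dyadicStack,
      Set.indicator_of_notMem (hsub (one_le_pow₀ one_le_two)), zero_add]
    exact (Finset.sum_eq_zero fun k hk => Set.indicator_of_notMem
      (hsub (pow_le_pow_right₀ one_le_two (Finset.mem_range.mp hk))) _).le

lemma volume_ball_le_mass_dyadicStack :
    volume (ball (0 : Space N) 1) ≤ mass N (dyadicStack N lam K) := by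
  rw [← lintegral_indicator_one measurableSet_ball]
  refine lintegral_mono fun x => ?_
  by_cases hx : x ∈ ball (0 : Space N) 1
  · simpa [Set.indicator_of_mem hx] using one_le_dyadicStack hx
  · simp [Set.indicator_of_notMem hx]

lemma mom_dyadicStack_le (hN : 0 < N) {μ : ℝ} (hμ0 : 0 ≤ μ) (hμ : μ ≤ lam) :
    mom N μ (dyadicStack N lam K) ≤ 2 * volume (ball (0 : Space N) 1) := by
  set ω := volume (ball (0 : Space N) 1)
  have hlayer : ∀ k ∈ Finset.range K,
      mom N μ ((ball 0 ((2 : ℝ) ^ (k + 1))).indicator fun _ => dyadicHeight N lam K k) ≤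
        ENNReal.ofReal (K : ℝ)⁻¹ * ω := fun k _ =>
    (mom_indicator_ball_le hN hμ0 (by positivity) (dyadicHeight_nonneg k)).trans
      (by gcongr; exact dyadicHeight_mul_rpow_le hμ k)
  unfold dyadicStack
  rw [mom_add (measurable_const.indicator measurableSet_ball)
      (Set.indicator_nonneg fun _ _ => zero_le_one)
      (fun _ => Finset.sum_nonneg fun k _ =>
        Set.indicator_nonneg (fun _ _ => dyadicHeight_nonneg k) _),
    mom_finset_sum _ (fun _ _ => measurable_const.indicator measurableSet_ball)
      (fun k _ => Set.indicator_nonneg fun _ _ => dyadicHeight_nonneg k), two_mul]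
  gcongr
  · simpa using mom_indicator_ball_le hN hμ0 one_pos zero_le_one
  · calc _ ≤ ∑ _k ∈ Finset.range K, ENNReal.ofReal (K : ℝ)⁻¹ * ω := Finset.sum_le_sum hlayer
      _ ≤ ω := by
        rw [Finset.sum_const, Finset.card_range, nsmul_eq_mul, ← mul_assoc,
          ← ENNReal.ofReal_natCast, ← ENNReal.ofReal_mul (Nat.cast_nonneg K)]
        refine mul_le_of_le_one_left zero_le (ENNReal.ofReal_le_one.mpr ?_)
        rcases K.eq_zero_or_pos with rfl | hK
        · simp
        · rw [mul_inv_cancel₀ (by positivity)]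

lemma I_dyadicStack_le (hN : 0 < N) (hlam : 0 ≤ lam) :
    I N lam (dyadicStack N lam K) ≤
      2 ^ lam * (2 * (2 * volume (ball (0 : Space N) 1)) * (2 * volume (ball (0 : Space N) 1))) :=
  (I_le_two_rpow_mul_mass_mul_mom hlam measurable_dyadicStack).trans <| by
    gcongr
    · exact mom_zero (N := N) _ ▸ mom_dyadicStack_le hN le_rfl hlam
    · exact mom_dyadicStack_le hN hlam le_rfl

lemma adm_dyadicStack (hN : 0 < N) (hlam : 0 ≤ lam) (hq : 0 < q) :
    Adm N q (dyadicStack N lam K) := by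
  have hmass := mom_zero (N := N) (dyadicStack N lam K) ▸ mom_dyadicStack_le hN le_rfl hlam
  refine ⟨measurable_dyadicStack, dyadicStack_nonneg,
    hmass.trans_lt (ENNReal.mul_lt_top (by simp) measure_ball_lt_top),
    qnorm_lt_top_of_le_indicator hq dyadicStack_nonneg measurableSet_ball measure_ball_lt_top.ne
      dyadicStack_le_indicator, fun hzero => ?_⟩
  have hmass0 : mass N (dyadicStack N lam K) = 0 := by
    rw [mass, lintegral_congr_ae (hzero.mono fun x hx => by rw [hx])]
    simp
  exact (measure_ball_pos volume (0 : Space N) one_pos).ne'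
    (le_antisymm (hmass0 ▸ volume_ball_le_mass_dyadicStack) zero_le)

lemma le_setLIntegral_shell_dyadicStack (hN : 0 < N) (hq : 0 ≤ q) (hqN : q * (N + lam) ≤ N)
    {k : ℕ} (hk : k < K) :
    ENNReal.ofReal ((K : ℝ) ^ (-q) / 2 ^ N) * volume (ball (0 : Space N) 1) ≤
      ∫⁻ x in norm ⁻¹' Set.Ico ((2 : ℝ) ^ k) (2 ^ (k + 1)),
        ENNReal.ofReal (dyadicStack N lam K x ^ q) := by
  have : Nonempty (Fin N) := ⟨⟨0, hN⟩⟩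
  calc _ ≤ ENNReal.ofReal (dyadicHeight N lam K k ^ q) *
          volume (ball (0 : Space N) (2 ^ k)) := by
        rw [volume_ball_eq_pow_mul hN (R := 2 ^ k) (by positivity), ← mul_assoc,
          ← ENNReal.ofReal_mul (Real.rpow_nonneg (dyadicHeight_nonneg k) q)]
        gcongr
        exact le_dyadicHeight_rpow_mul hqN k
    _ ≤ ENNReal.ofReal (dyadicHeight N lam K k ^ q) *
          volume (norm ⁻¹' Set.Ico ((2 : ℝ) ^ k) (2 ^ (k + 1)) : Set (Space N)) := by
        refine mul_le_mul_right ?_ _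
        simpa only [pow_succ'] using Measure.addHaar_ball_le_addHaar_annulus
          (volume : Measure (Space N)) (by positivity : (0 : ℝ) ≤ 2 ^ k)
    _ = ∫⁻ _ in norm ⁻¹' Set.Ico ((2 : ℝ) ^ k) (2 ^ (k + 1)),
          ENNReal.ofReal (dyadicHeight N lam K k ^ q) := (setLIntegral_const _ _).symm
    _ ≤ _ := setLIntegral_mono (measurable_dyadicStack.pow_const q).ennreal_ofReal fun x hx => by
        gcongr
        · exact dyadicHeight_nonneg k
        · exact dyadicHeight_le_dyadicStack hk (mem_ball_zero_iff.mpr hx.2)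

lemma le_qnorm_dyadicStack (hN : 0 < N) (hK : 0 < K) (hq : 0 ≤ q) (hqN : q * (N + lam) ≤ N) :
    ENNReal.ofReal ((K : ℝ) ^ (1 - q) / 2 ^ N) * volume (ball (0 : Space N) 1) ≤
      qnorm N q (dyadicStack N lam K) := by
  set shell : ℕ → Set (Space N) := fun k => norm ⁻¹' Set.Ico ((2 : ℝ) ^ k) (2 ^ (k + 1))
  have hdisj : (↑(Finset.range K) : Set ℕ).PairwiseDisjoint shell := fun j _ k _ hjk =>
    ((pow_right_mono₀ one_le_two).pairwise_disjoint_on_Ico_succ hjk).preimage _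
  have hKq : (K : ℝ) ^ (1 - q) = K * (K : ℝ) ^ (-q) := by
    rw [sub_eq_add_neg, Real.rpow_add (by positivity), Real.rpow_one]
  calc _ = ∑ _k ∈ Finset.range K,
          ENNReal.ofReal ((K : ℝ) ^ (-q) / 2 ^ N) * volume (ball (0 : Space N) 1) := by
        rw [Finset.sum_const, Finset.card_range, nsmul_eq_mul, ← mul_assoc,
          ← ENNReal.ofReal_natCast, ← ENNReal.ofReal_mul (Nat.cast_nonneg K), hKq, mul_div_assoc]
    _ ≤ ∑ k ∈ Finset.range K, ∫⁻ x in shell k, ENNReal.ofReal (dyadicStack N lam K x ^ q) :=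
        Finset.sum_le_sum fun k hk =>
          le_setLIntegral_shell_dyadicStack hN hq hqN (Finset.mem_range.mp hk)
    _ = ∫⁻ x in ⋃ k ∈ Finset.range K, shell k, ENNReal.ofReal (dyadicStack N lam K x ^ q) :=
        (lintegral_biUnion_finset (μ := volume) hdisj
          (fun k _ => measurableSet_Ico.preimage measurable_norm) _).symm
    _ ≤ qnorm N q (dyadicStack N lam K) := setLIntegral_le_lintegral _ _

lemma tendsto_qnorm_dyadicStack (hN : 0 < N) (hq0 : 0 < q) (hq1 : q < 1)
    (hqN : q * (N + lam) ≤ N) :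
    Tendsto (fun K => qnorm N q (dyadicStack N lam K)) atTop (𝓝 ⊤) := by
  have hω : volume (ball (0 : Space N) 1) ≠ 0 := (measure_ball_pos _ _ one_pos).ne'
  have hωtop : volume (ball (0 : Space N) 1) ≠ ⊤ := measure_ball_lt_top.ne
  have hpow : Tendsto (fun K : ℕ => (K : ℝ) ^ (1 - q) / 2 ^ N) atTop atTop :=
    ((tendsto_rpow_atTop (by linarith)).comp tendsto_natCast_atTop_atTop).atTop_div_const
      (by positivity)
  refine tendsto_nhds_top_mono ?_ ((eventually_gt_atTop 0).mono fun K hK =>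
    le_qnorm_dyadicStack hN hK hq0.le hqN)
  simpa [ENNReal.top_mul hω] using
    ENNReal.Tendsto.mul_const (ENNReal.tendsto_ofReal_atTop.comp hpow) (Or.inr hωtop)

lemma tendsto_denom_dyadicStack (hN : 0 < N) (hlam : 0 < lam) (hq0 : 0 < q) (hq1 : q < 1)
    (hqN : q * (N + lam) ≤ N) :
    Tendsto (fun K => denom N lam q (dyadicStack N lam K)) atTop (𝓝 ⊤) := by
  set ω := volume (ball (0 : Space N) 1)
  have hω : ω ^ alpha N lam q ≠ 0 :=
    (ENNReal.rpow_pos (measure_ball_pos _ _ one_pos) measure_ball_lt_top.ne).ne'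
  have hωtop : ω ≠ ⊤ := measure_ball_lt_top.ne
  have hβ := two_sub_alpha_div_pos hN hlam hq0 hq1
  refine tendsto_nhds_top_mono' ?_ fun K => mul_le_mul_left
    (ENNReal.rpow_le_rpow volume_ball_le_mass_dyadicStack (alpha_nonneg hq1 hqN)) _
  simpa [ENNReal.top_rpow_of_pos hβ, ENNReal.mul_top hω] using
    ENNReal.Tendsto.const_mul
      ((tendsto_qnorm_dyadicStack hN hq0 hq1 hqN).ennrpow_const ((2 - alpha N lam q) / q))
      (Or.inr (ENNReal.rpow_ne_top_of_nonneg (alpha_nonneg hq1 hqN) hωtop))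

end

end RHLS

/-- if `0 < q ≤ N/(N+λ)`, then `C_{N,λ,q} = 0`; that is, for every `ε > 0`
there is an admissible `ρ` with `I_λ[ρ] < ε (∫ρ)^α (∫ρ^q)^{(2-α)/q}`. -/
theorem stmt2 (N : ℕ) (hN : 1 ≤ N) (lam q : ℝ) (hlam : 0 < lam)
    (hq0 : 0 < q) (hq : q ≤ (N : ℝ) / ((N : ℝ) + lam)) :
    RHLS.C N lam q = 0 ∧
    ∀ ε : ℝ, 0 < ε → ∃ ρ : RHLS.Space N → ℝ, RHLS.Adm N q ρ ∧
      RHLS.I N lam ρ < ENNReal.ofReal ε * RHLS.denom N lam q ρ := by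
  have hNlam : (0 : ℝ) < N + lam := by positivity
  have hqN : q * (N + lam) ≤ N := (le_div_iff₀ hNlam).mp hq
  have hq1 : q < 1 := hq.trans_lt ((div_lt_one hNlam).mpr (by linarith))
  have hex : ∀ ε : ℝ, 0 < ε → ∃ ρ : RHLS.Space N → ℝ, RHLS.Adm N q ρ ∧
      RHLS.I N lam ρ < ENNReal.ofReal ε * RHLS.denom N lam q ρ := fun ε hε => by
    obtain ⟨K, hK⟩ := RHLS.exists_I_lt_of_tendsto_denom (by finiteness)
      (fun K => RHLS.I_dyadicStack_le hN hlam.le)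
      (RHLS.tendsto_denom_dyadicStack hN hlam hq0 hq1 hqN) hε
    exact ⟨_, RHLS.adm_dyadicStack hN hlam.le hq0, hK⟩
  exact ⟨RHLS.C_eq_zero_of_forall_exists_lt hex, hex⟩
end
end

section
/- Let N ≥ 1 be an integer and λ > 0. If N/(N+λ) < q < 1, then C_{N,λ,q} > 0; that is, there exists a constant C > 0 such that I_λ[ρ] ≥ C (∫_{ℝ^N} ρ dx)^α (∫_{ℝ^N} ρ^q dx)^{(2−α)/q} for all nonnegative ρ ∈ L^1 ∩ L^q(ℝ^N). -/
open MeasureTheory ENNReal Filter Topology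

noncomputable section

/-!
Fix `x` and `r > 0` and split `∫ ρ^q` over the ball `B(x, r)` and its complement. Hölder's
inequality with exponents `1/q` and `1/(1-q)` bounds the first part by `(∫ ρ)^q |B(x, r)|^(1-q)`;
writing `ρ^q = (|x-y|^λ ρ)^q |x-y|^(-λq)` it bounds the second part by
`(∫ |x-y|^λ ρ(y) dy)^q (∫_{|z| ≥ r} |z|^(-s) dz)^(1-q)` with `s = λq/(1-q)`. By scaling the last
integral is `r^(N-s)` times a constant, which is finite precisely because `q > N/(N+λ)`, i.e.
`s > N`. Optimising in `r` bounds the potential `∫ |x-y|^λ ρ(y) dy` from below, uniformly in `x`,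
by `C (∫ ρ)^(α-1) (∫ ρ^q)^((2-α)/q)`; integrating against `ρ(x) dx` gives the inequality.
-/

open Metric Module

theorem ENNReal.lintegral_rpow_le_lintegral_mul_rpow_mul_lintegral_rpow {α : Type*}
    [MeasurableSpace α] {μ : Measure α} {q : ℝ} (hq0 : 0 < q) (hq1 : q < 1)
    {f g : α → ℝ≥0∞} (hf : AEMeasurable f μ) (hg : AEMeasurable g μ)
    (hg0 : ∀ᵐ a ∂μ, g a ≠ 0) (hgtop : ∀ᵐ a ∂μ, g a ≠ ⊤) :
    ∫⁻ a, f a ^ q ∂μ ≤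
      (∫⁻ a, g a * f a ∂μ) ^ q * (∫⁻ a, g a ^ (-q / (1 - q)) ∂μ) ^ (1 - q) := by
  have hpq : Real.HolderConjugate (1 / q) (1 / (1 - q)) :=
    ⟨by rw [one_div, one_div, inv_inv, inv_inv]; ring, by positivity, by positivity⟩
  have hsplit : (fun a => f a ^ q) =ᵐ[μ] fun a => (g a * f a) ^ q * g a ^ (-q) := by
    filter_upwards [hg0, hgtop] with a h0 htop
    rw [ENNReal.mul_rpow_of_nonneg _ _ hq0.le, mul_comm (g a ^ q), mul_assoc,
      ← ENNReal.rpow_add _ _ h0 htop, add_neg_cancel, ENNReal.rpow_zero, mul_one]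
  calc ∫⁻ a, f a ^ q ∂μ = ∫⁻ a, (g a * f a) ^ q * g a ^ (-q) ∂μ := lintegral_congr_ae hsplit
    _ ≤ (∫⁻ a, ((g a * f a) ^ q) ^ (1 / q) ∂μ) ^ (1 / (1 / q)) *
          (∫⁻ a, (g a ^ (-q)) ^ (1 / (1 - q)) ∂μ) ^ (1 / (1 / (1 - q))) :=
        ENNReal.lintegral_mul_le_Lp_mul_Lq μ hpq ((hg.mul hf).pow_const q) (hg.pow_const _)
    _ = _ := by
        simp only [← ENNReal.rpow_mul, one_div_one_div]
        rw [mul_one_div_cancel hq0.ne']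
        simp only [ENNReal.rpow_one, mul_one_div]

theorem Real.rpow_add_le_of_forall_le_add_rpow {Q A B a b : ℝ} (ha : 0 < a) (hb : 0 < b)
    (hQ : 0 ≤ Q) (hA : 0 < A) (hB : 0 ≤ B) (h : ∀ r > 0, Q ≤ A * r ^ a + B * r ^ (-b)) :
    Q ^ (a + b) ≤ 2 ^ (a + b) * A ^ b * B ^ a := by
  rcases hQ.eq_or_lt with rfl | hQ
  · rw [Real.zero_rpow (add_pos ha hb).ne']
    positivity
  set t := Q / (2 * A) with ht
  have htpos : 0 < t := by positivity
  have hhalf : Q / 2 ≤ B * t ^ (-b / a) := by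
    have := h (t ^ (1 / a)) (by positivity)
    rw [← Real.rpow_mul htpos.le, ← Real.rpow_mul htpos.le, one_div_mul_cancel ha.ne',
      Real.rpow_one, show A * t = Q / 2 by rw [ht]; field_simp,
      show 1 / a * -b = -b / a by ring] at this
    linarith
  have hpow : (Q / 2) ^ a * t ^ b ≤ B ^ a := by
    calc (Q / 2) ^ a * t ^ b ≤ (B * t ^ (-b / a)) ^ a * t ^ b := by gcongr
      _ = B ^ a := by
        rw [Real.mul_rpow hB (by positivity), ← Real.rpow_mul htpos.le, div_mul_cancel₀ _ ha.ne',
          mul_assoc, ← Real.rpow_add htpos, neg_add_cancel, Real.rpow_zero, mul_one]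
  calc Q ^ (a + b) = 2 ^ (a + b) * A ^ b * ((Q / 2) ^ a * t ^ b) := by
        rw [ht, Real.div_rpow hQ.le zero_le_two, Real.div_rpow hQ.le (by positivity),
          Real.mul_rpow zero_le_two hA.le, Real.rpow_add hQ, Real.rpow_add zero_lt_two]
        field_simp
    _ ≤ 2 ^ (a + b) * A ^ b * B ^ a := by gcongr

theorem Real.le_of_forall_le_mul_rpow_add_mul_rpow {Q M k A B a b q : ℝ} (ha : 0 < a)
    (hb : 0 < b) (hq : 0 < q) (hQ : 0 ≤ Q) (hM : 0 < M) (hk : 0 ≤ k) (hA : 0 < A) (hB : 0 < B)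
    (h : ∀ r > 0, Q ≤ M ^ q * A * r ^ a + k ^ q * B * r ^ (-b)) :
    (2 ^ (a + b) * A ^ b * B ^ a) ^ (-(1 / (q * a))) * M ^ (-b / a) *
      Q ^ ((a + b) / (q * a)) ≤ k := by
  have hopt := Real.rpow_add_le_of_forall_le_add_rpow ha hb hQ (by positivity) (by positivity) h
  rw [Real.mul_rpow (by positivity) hA.le, Real.mul_rpow (by positivity) hB.le,
    ← Real.rpow_mul hM.le, ← Real.rpow_mul hk] at hopt
  have hqa : 0 < q * a := by positivity
  rw [← Real.rpow_le_rpow_iff (by positivity) hk hqa, Real.mul_rpow (by positivity) (by positivity),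
    Real.mul_rpow (by positivity) (by positivity), ← Real.rpow_mul (by positivity),
    ← Real.rpow_mul hM.le, ← Real.rpow_mul hQ, neg_mul, one_div_mul_cancel hqa.ne',
    div_mul_cancel₀ _ hqa.ne', Real.rpow_neg_one, show -b / a * (q * a) = -(q * b) by field_simp,
    Real.rpow_neg hM.le, inv_mul_eq_div, div_mul_eq_mul_div, div_le_iff₀ (by positivity),
    inv_mul_eq_div, div_le_iff₀ (by positivity)]
  linarith

section HaarMeasure

variable {E : Type*} [NormedAddCommGroup E] [NormedSpace ℝ E] [FiniteDimensional ℝ E]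
  [MeasurableSpace E] [BorelSpace E] (μ : Measure E) [μ.IsAddHaarMeasure]

theorem lintegral_compl_ball_rpow_neg_norm (s : ℝ) {r : ℝ} (hr : 0 < r) :
    ∫⁻ z in (ball 0 r)ᶜ, ENNReal.ofReal (‖z‖ ^ (-s)) ∂μ =
      ENNReal.ofReal (r ^ ((finrank ℝ E : ℝ) - s)) *
        ∫⁻ z in (ball 0 1)ᶜ, ENNReal.ofReal (‖z‖ ^ (-s)) ∂μ := by
  set F : E → ℝ≥0∞ := fun z => ENNReal.ofReal (‖z‖ ^ (-s))
  have hF : Measurable F := by fun_prop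
  have hscale : ∀ z : E, (ball 0 r)ᶜ.indicator F (r • z) =
      ENNReal.ofReal (r ^ (-s)) * (ball 0 1)ᶜ.indicator F z := by
    intro z
    have hmem : r • z ∈ ball (0 : E) r ↔ z ∈ ball (0 : E) 1 := by
      simp [norm_smul, abs_of_pos hr, hr]
    by_cases hz : z ∈ ball (0 : E) 1
    · simp [Set.indicator_of_notMem, hz, hmem.mpr hz]
    · rw [Set.indicator_of_mem (by simpa [hmem] using hz),
        Set.indicator_of_mem (by simpa using hz)]
      simp only [F, norm_smul, Real.norm_eq_abs, abs_of_pos hr]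
      rw [Real.mul_rpow hr.le (norm_nonneg z), ENNReal.ofReal_mul (by positivity)]
  have hS := (measurableSet_ball (x := (0 : E)) (ε := r)).compl
  have hmap := lintegral_map (μ := μ) (hF.indicator hS) (measurable_const_smul r)
  rw [Measure.map_addHaar_smul μ hr.ne', lintegral_smul_measure, smul_eq_mul,
    lintegral_indicator hS] at hmap
  simp only [hscale] at hmap
  rw [lintegral_const_mul _ (hF.indicator measurableSet_ball.compl),
    lintegral_indicator measurableSet_ball.compl] at hmap
  have hrd : (0 : ℝ) < r ^ finrank ℝ E := by positivity
  calc ∫⁻ z in (ball 0 r)ᶜ, F z ∂μ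
      = ENNReal.ofReal (r ^ finrank ℝ E) *
          (ENNReal.ofReal |(r ^ finrank ℝ E)⁻¹| * ∫⁻ z in (ball 0 r)ᶜ, F z ∂μ) := by
        rw [abs_of_pos (inv_pos.mpr hrd), ← mul_assoc, ← ENNReal.ofReal_mul hrd.le,
          mul_inv_cancel₀ hrd.ne', ENNReal.ofReal_one, one_mul]
    _ = ENNReal.ofReal (r ^ ((finrank ℝ E : ℝ) - s)) * ∫⁻ z in (ball 0 1)ᶜ, F z ∂μ := by
        rw [hmap, ← mul_assoc, ← ENNReal.ofReal_mul hrd.le, ← Real.rpow_natCast,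
          ← Real.rpow_add hr, ← sub_eq_add_neg]

theorem lintegral_compl_ball_rpow_neg_norm_sub (x : E) (s : ℝ) {r : ℝ} (hr : 0 < r) :
    ∫⁻ y in (ball x r)ᶜ, ENNReal.ofReal (‖y - x‖ ^ (-s)) ∂μ =
      ENNReal.ofReal (r ^ ((finrank ℝ E : ℝ) - s)) *
        ∫⁻ z in (ball 0 1)ᶜ, ENNReal.ofReal (‖z‖ ^ (-s)) ∂μ := by
  have hind : ∀ y, (ball x r)ᶜ.indicator (fun y => ENNReal.ofReal (‖y - x‖ ^ (-s))) y =
      (ball 0 r)ᶜ.indicator (fun z => ENNReal.ofReal (‖z‖ ^ (-s))) (y - x) := by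
    intro y
    simp only [Set.indicator, Set.mem_compl_iff, mem_ball, dist_eq_norm, sub_zero]
  rw [← lintegral_compl_ball_rpow_neg_norm μ s hr, ← lintegral_indicator measurableSet_ball.compl,
    ← lintegral_indicator measurableSet_ball.compl]
  simp only [hind]
  exact lintegral_sub_right_eq_self _ x

theorem lintegral_compl_ball_one_rpow_neg_norm_lt_top {s : ℝ} (hs : (finrank ℝ E : ℝ) < s) :
    ∫⁻ z in (ball 0 1)ᶜ, ENNReal.ofReal (‖z‖ ^ (-s)) ∂μ < ⊤ := by
  have hs0 : 0 < s := lt_of_le_of_lt (Nat.cast_nonneg _) hs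
  have hle : ∀ z ∈ (ball (0 : E) 1)ᶜ,
      ENNReal.ofReal (‖z‖ ^ (-s)) ≤ ENNReal.ofReal (2 ^ s) * ENNReal.ofReal ((1 + ‖z‖) ^ (-s)) := by
    intro z hz
    have hz1 : 1 ≤ ‖z‖ := by simpa using hz
    rw [← ENNReal.ofReal_mul (by positivity)]
    refine ENNReal.ofReal_le_ofReal ?_
    calc ‖z‖ ^ (-s) = 2 ^ s * (2 * ‖z‖) ^ (-s) := by
          rw [Real.mul_rpow zero_le_two (norm_nonneg z), ← mul_assoc, Real.rpow_neg zero_le_two,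
            mul_inv_cancel₀ (by positivity), one_mul]
      _ ≤ 2 ^ s * (1 + ‖z‖) ^ (-s) := by
          refine mul_le_mul_of_nonneg_left ?_ (by positivity)
          exact Real.rpow_le_rpow_of_nonpos (by positivity) (by linarith) (by linarith)
  calc ∫⁻ z in (ball 0 1)ᶜ, ENNReal.ofReal (‖z‖ ^ (-s)) ∂μ
      ≤ ∫⁻ z in (ball 0 1)ᶜ, ENNReal.ofReal (2 ^ s) * ENNReal.ofReal ((1 + ‖z‖) ^ (-s)) ∂μ :=
        setLIntegral_mono' measurableSet_ball.compl hle
    _ ≤ ∫⁻ z, ENNReal.ofReal (2 ^ s) * ENNReal.ofReal ((1 + ‖z‖) ^ (-s)) ∂μ :=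
        setLIntegral_le_lintegral _ _
    _ = ENNReal.ofReal (2 ^ s) * ∫⁻ z, ENNReal.ofReal ((1 + ‖z‖) ^ (-s)) ∂μ :=
        lintegral_const_mul _ (by fun_prop)
    _ < ⊤ := ENNReal.mul_lt_top ENNReal.ofReal_lt_top (finite_integral_one_add_norm hs)

theorem lintegral_rpow_le_ball_add_compl [Nontrivial E] {lam q : ℝ} (hq0 : 0 < q) (hq1 : q < 1)
    {f : E → ℝ≥0∞} (hf : Measurable f) (x : E) {r : ℝ} (hr : 0 < r) :
    ∫⁻ y, f y ^ q ∂μ ≤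
      (∫⁻ y, f y ∂μ) ^ q * (ENNReal.ofReal (r ^ finrank ℝ E) * μ (ball 0 1)) ^ (1 - q) +
      (∫⁻ y, ENNReal.ofReal (‖x - y‖ ^ lam) * f y ∂μ) ^ q *
        (ENNReal.ofReal (r ^ ((finrank ℝ E : ℝ) - lam * q / (1 - q))) *
          ∫⁻ z in (ball 0 1)ᶜ, ENNReal.ofReal (‖z‖ ^ (-(lam * q / (1 - q)))) ∂μ) ^ (1 - q) := by
  rw [← lintegral_add_compl _ (measurableSet_ball (x := x) (ε := r))]
  gcongr
  · calc ∫⁻ y in ball x r, f y ^ q ∂μ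
        ≤ (∫⁻ y in ball x r, 1 * f y ∂μ) ^ q *
            (∫⁻ y in ball x r, 1 ^ (-q / (1 - q)) ∂μ) ^ (1 - q) :=
          ENNReal.lintegral_rpow_le_lintegral_mul_rpow_mul_lintegral_rpow hq0 hq1
            hf.aemeasurable aemeasurable_const (by simp) (by simp)
      _ ≤ (∫⁻ y, f y ∂μ) ^ q * (ENNReal.ofReal (r ^ finrank ℝ E) * μ (ball 0 1)) ^ (1 - q) := by
          simp only [one_mul, ENNReal.one_rpow, setLIntegral_const, one_mul,
            Measure.addHaar_ball μ x hr.le]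
          gcongr
          exact Measure.restrict_le_self
  · have hg : ∀ y ∈ (ball x r)ᶜ, 0 < ‖x - y‖ := fun y hy => by
      rw [norm_sub_rev]
      exact hr.trans_le (by simpa [dist_eq_norm] using hy)
    have hweight : ∀ y ∈ (ball x r)ᶜ, ENNReal.ofReal (‖x - y‖ ^ lam) ^ (-q / (1 - q)) =
        ENNReal.ofReal (‖y - x‖ ^ (-(lam * q / (1 - q)))) := fun y hy => by
      rw [ENNReal.ofReal_rpow_of_pos (Real.rpow_pos_of_pos (hg y hy) _), ← Real.rpow_mul
        (norm_nonneg _), norm_sub_rev]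
      ring_nf
    calc ∫⁻ y in (ball x r)ᶜ, f y ^ q ∂μ
        ≤ (∫⁻ y in (ball x r)ᶜ, ENNReal.ofReal (‖x - y‖ ^ lam) * f y ∂μ) ^ q *
            (∫⁻ y in (ball x r)ᶜ, ENNReal.ofReal (‖x - y‖ ^ lam) ^ (-q / (1 - q)) ∂μ) ^ (1 - q) :=
          ENNReal.lintegral_rpow_le_lintegral_mul_rpow_mul_lintegral_rpow hq0 hq1
            hf.aemeasurable (by fun_prop)
            ((ae_restrict_iff' measurableSet_ball.compl).mpr (Filter.Eventually.of_forall
              fun y hy => by simpa using Real.rpow_pos_of_pos (hg y hy) lam))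
            (Filter.Eventually.of_forall fun _ => ENNReal.ofReal_ne_top)
      _ ≤ _ := by
          rw [setLIntegral_congr_fun measurableSet_ball.compl hweight,
            lintegral_compl_ball_rpow_neg_norm_sub μ x _ hr]
          gcongr
          exact Measure.restrict_le_self

theorem lintegral_rpow_le_ball_add_compl_real [Nontrivial E] {lam q : ℝ} (hq0 : 0 < q)
    (hq1 : q < 1) {f : E → ℝ≥0∞} (hf : Measurable f) (x : E) {M Q k ω W : ℝ} (hM : 0 ≤ M)
    (hk : 0 ≤ k) (hω : 0 ≤ ω) (hW : 0 ≤ W)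
    (hMe : ∫⁻ y, f y ∂μ = ENNReal.ofReal M) (hQe : ∫⁻ y, f y ^ q ∂μ = ENNReal.ofReal Q)
    (hke : ∫⁻ y, ENNReal.ofReal (‖x - y‖ ^ lam) * f y ∂μ = ENNReal.ofReal k)
    (hωe : μ (ball 0 1) = ENNReal.ofReal ω)
    (hWe : ∫⁻ z in (ball 0 1)ᶜ, ENNReal.ofReal (‖z‖ ^ (-(lam * q / (1 - q)))) ∂μ ≤
      ENNReal.ofReal W)
    {r : ℝ} (hr : 0 < r) :
    Q ≤ M ^ q * ω ^ (1 - q) * r ^ (finrank ℝ E * (1 - q)) +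
      k ^ q * W ^ (1 - q) * r ^ (-(lam * q - finrank ℝ E * (1 - q))) := by
  have h := lintegral_rpow_le_ball_add_compl μ (lam := lam) hq0 hq1 hf x hr
  rw [hMe, hQe, hke, hωe, ← Real.rpow_natCast] at h
  have h1q : 0 ≤ 1 - q := by linarith
  grw [hWe] at h
  rw [← ENNReal.ofReal_mul (by positivity), ← ENNReal.ofReal_mul (by positivity),
    ENNReal.ofReal_rpow_of_nonneg hM hq0.le, ENNReal.ofReal_rpow_of_nonneg hk hq0.le,
    ENNReal.ofReal_rpow_of_nonneg (by positivity) h1q,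
    ENNReal.ofReal_rpow_of_nonneg (by positivity) h1q, ← ENNReal.ofReal_mul (by positivity),
    ← ENNReal.ofReal_mul (by positivity), ← ENNReal.ofReal_add (by positivity) (by positivity),
    ENNReal.ofReal_le_ofReal_iff (by positivity)] at h
  convert h using 2
  · rw [Real.mul_rpow (by positivity) hω, ← Real.rpow_mul hr.le]; ring
  · rw [Real.mul_rpow (by positivity) hW, ← Real.rpow_mul hr.le, mul_comm (r ^ _), ← mul_assoc]
    have : 1 - q ≠ 0 := by linarith
    congr 2
    field_simp
    ring

theorem exists_pos_le_lintegral_potential [Nontrivial E] {lam q : ℝ} (hq0 : 0 < q) (hq1 : q < 1)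
    (hlq : finrank ℝ E * (1 - q) < lam * q) :
    ∃ c : ℝ, 0 < c ∧ ∀ f : E → ℝ≥0∞, Measurable f → ∫⁻ y, f y ∂μ ≠ 0 →
      ∫⁻ y, f y ∂μ ≠ ⊤ → ∫⁻ y, f y ^ q ∂μ ≠ ⊤ → ∀ x : E,
        ENNReal.ofReal c * (∫⁻ y, f y ∂μ) ^ (RHLS.alpha (finrank ℝ E) lam q - 1) *
            (∫⁻ y, f y ^ q ∂μ) ^ ((2 - RHLS.alpha (finrank ℝ E) lam q) / q) ≤
          ∫⁻ y, ENNReal.ofReal (‖x - y‖ ^ lam) * f y ∂μ := by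
  set d : ℝ := (finrank ℝ E : ℝ) with hd
  have hd0 : 0 < d := by rw [hd]; exact_mod_cast Module.finrank_pos
  have h1q : 0 < 1 - q := by linarith
  set a := d * (1 - q) with ha
  set b := lam * q - a with hb
  have ha0 : 0 < a := by positivity
  have hb0 : 0 < b := by linarith
  have hs : d < lam * q / (1 - q) := by rw [lt_div_iff₀ h1q]; linarith
  obtain ⟨ω, hω0, hωe⟩ : ∃ ω : ℝ, 0 < ω ∧ μ (ball 0 1) = ENNReal.ofReal ω :=
    ⟨_, ENNReal.toReal_pos (measure_ball_pos μ 0 one_pos).ne' measure_ball_lt_top.ne,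
      (ENNReal.ofReal_toReal measure_ball_lt_top.ne).symm⟩
  -- Any positive bound on the weight integral will do; this avoids proving it is nonzero.
  obtain ⟨W, hW0, hWle⟩ : ∃ W : ℝ, 0 < W ∧
      ∫⁻ z in (ball 0 1)ᶜ, ENNReal.ofReal (‖z‖ ^ (-(lam * q / (1 - q)))) ∂μ ≤
        ENNReal.ofReal W := by
    set Wₑ := ∫⁻ z in (ball 0 1)ᶜ, ENNReal.ofReal (‖z‖ ^ (-(lam * q / (1 - q)))) ∂μ
    refine ⟨Wₑ.toReal + 1, by positivity, ?_⟩
    exact (ENNReal.le_ofReal_iff_toReal_le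
      (lintegral_compl_ball_one_rpow_neg_norm_lt_top μ hs).ne (by positivity)).mpr (by linarith)
  refine ⟨(2 ^ (a + b) * (ω ^ (1 - q)) ^ b * (W ^ (1 - q)) ^ a) ^ (-(1 / (q * a))),
    by positivity, fun f hf hMne hMtop hQtop x => ?_⟩
  rcases eq_or_ne (∫⁻ y, ENNReal.ofReal (‖x - y‖ ^ lam) * f y ∂μ) ⊤ with hKtop | hKtop
  · rw [hKtop]; exact le_top
  obtain ⟨M, hMpos, hMe⟩ : ∃ M : ℝ, 0 < M ∧ ∫⁻ y, f y ∂μ = ENNReal.ofReal M :=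
    ⟨_, ENNReal.toReal_pos hMne hMtop, (ENNReal.ofReal_toReal hMtop).symm⟩
  obtain ⟨Q, hQ0, hQe⟩ : ∃ Q : ℝ, 0 ≤ Q ∧ ∫⁻ y, f y ^ q ∂μ = ENNReal.ofReal Q :=
    ⟨_, ENNReal.toReal_nonneg, (ENNReal.ofReal_toReal hQtop).symm⟩
  obtain ⟨k, hk0, hke⟩ : ∃ k : ℝ, 0 ≤ k ∧
      ∫⁻ y, ENNReal.ofReal (‖x - y‖ ^ lam) * f y ∂μ = ENNReal.ofReal k :=
    ⟨_, ENNReal.toReal_nonneg, (ENNReal.ofReal_toReal hKtop).symm⟩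
  have hsplit : ∀ r > 0, Q ≤ M ^ q * ω ^ (1 - q) * r ^ a + k ^ q * W ^ (1 - q) * r ^ (-b) :=
    fun r hr => lintegral_rpow_le_ball_add_compl_real μ hq0 hq1 hf x hMpos.le hk0 hω0.le hW0.le
      hMe hQe hke hωe hWle hr
  have hkey := Real.le_of_forall_le_mul_rpow_add_mul_rpow ha0 hb0 hq0 hQ0 hMpos hk0
    (by positivity) (by positivity) hsplit
  have hα1 : RHLS.alpha (finrank ℝ E) lam q - 1 = -b / a := by
    rw [RHLS.alpha, ← hd, hb, ha]; field_simp; ring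
  have hα2 : (2 - RHLS.alpha (finrank ℝ E) lam q) / q = (a + b) / (q * a) := by
    rw [RHLS.alpha, ← hd, hb, ha]; field_simp; ring
  rw [hα1, hα2, hMe, hQe, hke, ENNReal.ofReal_rpow_of_pos hMpos,
    ENNReal.ofReal_rpow_of_nonneg hQ0 (by positivity), ← ENNReal.ofReal_mul (by positivity),
    ← ENNReal.ofReal_mul (by positivity)]
  exact ENNReal.ofReal_le_ofReal hkey

end HaarMeasure

namespace RHLS

theorem I_eq_lintegral_mul_potential {N : ℕ} {lam : ℝ} {ρ : Space N → ℝ} (hρ : Measurable ρ) :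
    I N lam ρ = ∫⁻ x, ENNReal.ofReal (ρ x) *
      ∫⁻ y, ENNReal.ofReal (‖x - y‖ ^ lam) * ENNReal.ofReal (ρ y) := by
  refine lintegral_congr fun x => ?_
  simp_rw [mul_assoc]
  exact lintegral_const_mul _ (by fun_prop)

theorem qnorm_eq_lintegral_rpow {N : ℕ} {q : ℝ} (hq : 0 ≤ q) {ρ : Space N → ℝ} (h0 : 0 ≤ ρ) :
    qnorm N q ρ = ∫⁻ x, ENNReal.ofReal (ρ x) ^ q :=
  lintegral_congr fun x => (ENNReal.ofReal_rpow_of_nonneg (h0 x) hq).symm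

theorem Adm.mass_ne_zero {N : ℕ} {q : ℝ} {ρ : Space N → ℝ} (h : Adm N q ρ) : mass N ρ ≠ 0 := by
  obtain ⟨hρ, h0, -, -, hne⟩ := h
  refine fun hzero => hne ?_
  filter_upwards [(lintegral_eq_zero_iff hρ.ennreal_ofReal).mp hzero] with x hx
  exact le_antisymm (ENNReal.ofReal_eq_zero.mp hx) (h0 x)

theorem Adm.qnorm_ne_zero {N : ℕ} {q : ℝ} {ρ : Space N → ℝ} (h : Adm N q ρ) : qnorm N q ρ ≠ 0 := by
  obtain ⟨hρ, h0, -, -, hne⟩ := h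
  refine fun hzero => hne ?_
  filter_upwards [(lintegral_eq_zero_iff (hρ.pow_const q).ennreal_ofReal).mp hzero] with x hx
  by_contra hx0
  exact (ENNReal.ofReal_eq_zero.mp hx).not_gt (Real.rpow_pos_of_pos ((h0 x).lt_of_ne' hx0) q)

theorem Adm.denom_ne_zero {N : ℕ} {lam q : ℝ} {ρ : Space N → ℝ} (h : Adm N q ρ) :
    denom N lam q ρ ≠ 0 :=
  (ENNReal.mul_pos (ENNReal.rpow_pos (pos_iff_ne_zero.mpr h.mass_ne_zero) h.2.2.1.ne).ne'
    (ENNReal.rpow_pos (pos_iff_ne_zero.mpr h.qnorm_ne_zero) h.2.2.2.1.ne).ne').ne'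

theorem Adm.denom_ne_top {N : ℕ} {lam q : ℝ} {ρ : Space N → ℝ} (h : Adm N q ρ) :
    denom N lam q ρ ≠ ⊤ :=
  ENNReal.mul_ne_top (ENNReal.rpow_ne_top_of_ne_zero h.mass_ne_zero h.2.2.1.ne)
    (ENNReal.rpow_ne_top_of_ne_zero h.qnorm_ne_zero h.2.2.2.1.ne)

theorem ofReal_le_C {N : ℕ} {lam q c : ℝ}
    (h : ∀ ρ, Adm N q ρ → ENNReal.ofReal c * denom N lam q ρ ≤ I N lam ρ) :
    ENNReal.ofReal c ≤ C N lam q := by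
  refine le_sInf ?_
  rintro _ ⟨ρ, hρ, rfl⟩
  exact (ENNReal.le_div_iff_mul_le (Or.inl hρ.denom_ne_zero) (Or.inl hρ.denom_ne_top)).mpr (h ρ hρ)

theorem exists_pos_mul_denom_le_I {N : ℕ} (hN : 1 ≤ N) {lam q : ℝ} (hq0 : 0 < q) (hq1 : q < 1)
    (hlq : N * (1 - q) < lam * q) :
    ∃ c : ℝ, 0 < c ∧ ∀ ρ, Adm N q ρ → ENNReal.ofReal c * denom N lam q ρ ≤ I N lam ρ := by
  have : Nontrivial (Space N) :=
    Module.nontrivial_of_finrank_pos (R := ℝ) (by rw [finrank_euclideanSpace_fin]; omega)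
  obtain ⟨c, hc, hpot⟩ := exists_pos_le_lintegral_potential (volume : Measure (Space N)) hq0 hq1
    (by rwa [finrank_euclideanSpace_fin])
  rw [finrank_euclideanSpace_fin] at hpot
  refine ⟨c, hc, fun ρ hρ => ?_⟩
  have hf : Measurable fun x => ENNReal.ofReal (ρ x) := hρ.1.ennreal_ofReal
  have hQ := qnorm_eq_lintegral_rpow hq0.le hρ.2.1
  have hK : ∀ x, ENNReal.ofReal c * mass N ρ ^ (alpha N lam q - 1) *
      qnorm N q ρ ^ ((2 - alpha N lam q) / q) ≤
        ∫⁻ y, ENNReal.ofReal (‖x - y‖ ^ lam) * ENNReal.ofReal (ρ y) := by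
    rw [hQ]
    exact hpot _ hf hρ.mass_ne_zero hρ.2.2.1.ne (hQ ▸ hρ.2.2.2.1.ne)
  calc ENNReal.ofReal c * denom N lam q ρ
      = ∫⁻ x, ENNReal.ofReal (ρ x) * (ENNReal.ofReal c * mass N ρ ^ (alpha N lam q - 1) *
          qnorm N q ρ ^ ((2 - alpha N lam q) / q)) := by
        have hα : mass N ρ ^ alpha N lam q = mass N ρ ^ (alpha N lam q - 1) * mass N ρ := by
          conv_lhs => rw [← sub_add_cancel (alpha N lam q) 1]
          rw [ENNReal.rpow_add _ _ hρ.mass_ne_zero hρ.2.2.1.ne, ENNReal.rpow_one]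
        rw [lintegral_mul_const _ hf, ← mass, denom, hα]
        ring
    _ ≤ ∫⁻ x, ENNReal.ofReal (ρ x) *
          ∫⁻ y, ENNReal.ofReal (‖x - y‖ ^ lam) * ENNReal.ofReal (ρ y) := by
        gcongr with x
        exact hK x
    _ = I N lam ρ := (I_eq_lintegral_mul_potential hρ.1).symm

end RHLS

/-- if `N/(N+λ) < q < 1`, then `C_{N,λ,q} > 0`; that is, there is `C > 0`
such that `I_λ[ρ] ≥ C (∫ρ)^α (∫ρ^q)^{(2-α)/q}` for all admissible ρ. -/
theorem stmt3 (N : ℕ) (hN : 1 ≤ N) (lam q : ℝ) (hlam : 0 < lam)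
    (hq : (N : ℝ) / ((N : ℝ) + lam) < q) (hq1 : q < 1) :
    0 < RHLS.C N lam q ∧
    ∃ C : ℝ, 0 < C ∧ ∀ ρ : RHLS.Space N → ℝ, RHLS.Adm N q ρ →
      ENNReal.ofReal C * RHLS.denom N lam q ρ ≤ RHLS.I N lam ρ := by
  have hNlam : (0 : ℝ) < N + lam := by positivity
  have hq0 : 0 < q := lt_of_le_of_lt (by positivity) hq
  have hlq : (N : ℝ) * (1 - q) < lam * q := by
    rw [div_lt_iff₀ hNlam] at hq
    linarith
  obtain ⟨c, hc, hineq⟩ := RHLS.exists_pos_mul_denom_le_I hN hq0 hq1 hlq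
  exact ⟨(ENNReal.ofReal_pos.mpr hc).trans_le (RHLS.ofReal_le_C hineq), c, hc, hineq⟩
end
end

section
/- Let N ≥ 1 be an integer, λ > 0 and N/(N+λ) < q < 1, and set θ := N(1−q)/(λq), which lies in (0,1). Then there is a constant c_{N,λ,q} > 0 such that for every measurable ρ ≥ 0 on ℝ^N one has (∫_{ℝ^N} ρ dx)^{1−θ} (∫_{ℝ^N} |x|^λ ρ(x) dx)^{θ} ≥ c_{N,λ,q} (∫_{ℝ^N} ρ^q dx)^{1/q}. -/
open MeasureTheory ENNReal Filter Topology

noncomputable section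

/-! Fix a scale `t > 0` and the weight `w(x) = max(1, |t x|)^λ ≤ 1 + t^λ |x|^λ`. Writing
`ρ^q = (ρ w)^q w^{-q}`, Hölder's inequality with exponents `1/q` and `1/(1-q)` gives
`∫ ρ^q ≤ (∫ ρ + t^λ ∫ |x|^λ ρ)^q (∫ w^{-q/(1-q)})^{1-q}`. By scaling, the last integral is
`t^{-N} ∫ max(1, |x|)^{-λq/(1-q)}`, which is finite precisely because `λq/(1-q) > N`, i.e. `θ < 1`.
The choice `t^λ = ∫ ρ / ∫ |x|^λ ρ` balances the two terms and gives the inequality. -/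

open Module

section WeightedHolder

variable {α : Type*} [MeasurableSpace α] {μ : Measure α}

theorem lintegral_rpow_le_lintegral_mul_weight {q : ℝ} (hq0 : 0 < q) (hq1 : q < 1)
    {f w : α → ℝ≥0∞} (hf : AEMeasurable f μ) (hw : AEMeasurable w μ)
    (hw0 : ∀ x, w x ≠ 0) (hwt : ∀ x, w x ≠ ∞) :
    ∫⁻ x, f x ^ q ∂μ ≤
      (∫⁻ x, f x * w x ∂μ) ^ q * (∫⁻ x, w x ^ (-(q / (1 - q))) ∂μ) ^ (1 - q) := by
  have hpq : (1 / q).HolderConjugate (1 / (1 - q)) := by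
    rw [Real.holderConjugate_iff, one_div, one_div, inv_inv, inv_inv]
    exact ⟨(one_lt_inv₀ hq0).2 hq1, by ring⟩
  have hsplit : ∀ x, f x ^ q = (f x * w x) ^ q * w x ^ (-q) := fun x => by
    rw [ENNReal.mul_rpow_of_nonneg _ _ hq0.le, mul_assoc, ← ENNReal.rpow_add _ _ (hw0 x) (hwt x),
      add_neg_cancel, ENNReal.rpow_zero, mul_one]
  calc ∫⁻ x, f x ^ q ∂μ = ∫⁻ x, (f x * w x) ^ q * w x ^ (-q) ∂μ := by simp_rw [← hsplit]
    _ ≤ (∫⁻ x, ((f x * w x) ^ q) ^ (1 / q) ∂μ) ^ (1 / (1 / q)) *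
          (∫⁻ x, (w x ^ (-q)) ^ (1 / (1 - q)) ∂μ) ^ (1 / (1 / (1 - q))) :=
        ENNReal.lintegral_mul_le_Lp_mul_Lq μ hpq (by fun_prop) (by fun_prop)
    _ = _ := by
        simp_rw [← ENNReal.rpow_mul, mul_one_div_cancel hq0.ne', ENNReal.rpow_one,
          one_div_one_div, neg_mul, mul_one_div]

theorem lintegral_rpow_eq_zero_of_lintegral_eq_zero {q : ℝ} (hq0 : 0 < q) {f : α → ℝ≥0∞}
    (hf : AEMeasurable f μ) (h : ∫⁻ x, f x ∂μ = 0) : ∫⁻ x, f x ^ q ∂μ = 0 := by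
  rw [lintegral_eq_zero_iff' hf] at h
  rw [lintegral_eq_zero_iff' (by fun_prop)]
  filter_upwards [h] with x hx
  simp [hx, hq0]

end WeightedHolder

theorem rpow_one_div_le_of_forall_scale {Q m e J : ℝ≥0∞} {d : ℕ} {lam q : ℝ} (hlam : 0 < lam)
    (hq0 : 0 < q) (hq1 : q < 1) (hm0 : m ≠ 0) (hmt : m ≠ ∞) (he0 : e ≠ 0) (het : e ≠ ∞)
    (h : ∀ t : ℝ, 0 < t →
      Q ≤ (m + ENNReal.ofReal (t ^ lam) * e) ^ q * (ENNReal.ofReal ((t ^ d)⁻¹) * J) ^ (1 - q)) :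
    Q ^ (1 / q) ≤
      2 * J ^ ((1 - q) / q) *
        (m ^ (1 - d * (1 - q) / (lam * q)) * e ^ (d * (1 - q) / (lam * q))) := by
  obtain ⟨a, ha, rfl⟩ : ∃ a, 0 < a ∧ m = ENNReal.ofReal a :=
    ⟨m.toReal, toReal_pos hm0 hmt, (ofReal_toReal hmt).symm⟩
  obtain ⟨b, hb, rfl⟩ : ∃ b, 0 < b ∧ e = ENNReal.ofReal b :=
    ⟨e.toReal, toReal_pos he0 het, (ofReal_toReal het).symm⟩
  set t := (a / b) ^ (1 / lam)
  have ht : 0 < t := by positivity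
  have htlam : t ^ lam = a / b := by
    rw [← Real.rpow_mul (by positivity), one_div_mul_cancel hlam.ne', Real.rpow_one]
  have hbalance : ENNReal.ofReal (t ^ lam) * ENNReal.ofReal b = ENNReal.ofReal a := by
    rw [htlam, ← ENNReal.ofReal_mul (by positivity), div_mul_cancel₀ _ hb.ne']
  have hpower : a * ((t ^ d)⁻¹) ^ ((1 - q) / q) =
      a ^ (1 - d * (1 - q) / (lam * q)) * b ^ (d * (1 - q) / (lam * q)) := by
    have hlogt : lam * Real.log t = Real.log a - Real.log b := by
      rw [← Real.log_rpow ht, htlam, Real.log_div ha.ne' hb.ne']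
    refine Real.log_injOn_pos (Set.mem_Ioi.2 (by positivity)) (Set.mem_Ioi.2 (by positivity)) ?_
    rw [Real.log_mul ha.ne' (by positivity), Real.log_rpow (by positivity), Real.log_inv,
      Real.log_pow, Real.log_mul (by positivity) (by positivity), Real.log_rpow ha,
      Real.log_rpow hb]
    field_simp
    linear_combination (-(d * (1 - q))) * hlogt
  have hexp : 0 ≤ (1 - q) / q := div_nonneg (by linarith) hq0.le
  calc Q ^ (1 / q)
      ≤ ((2 * ENNReal.ofReal a) ^ q * (ENNReal.ofReal ((t ^ d)⁻¹) * J) ^ (1 - q)) ^ (1 / q) := by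
        gcongr
        simpa only [hbalance, two_mul] using h t ht
    _ = 2 * J ^ ((1 - q) / q) * ENNReal.ofReal (a * ((t ^ d)⁻¹) ^ ((1 - q) / q)) := by
        rw [ENNReal.mul_rpow_of_nonneg _ _ (by positivity), ← ENNReal.rpow_mul, ← ENNReal.rpow_mul,
          mul_one_div_cancel hq0.ne', ENNReal.rpow_one, mul_one_div,
          ENNReal.mul_rpow_of_nonneg _ _ hexp, ENNReal.ofReal_rpow_of_pos (by positivity),
          ENNReal.ofReal_mul ha.le]
        ring
    _ = _ := by
        rw [hpower, ENNReal.ofReal_mul (by positivity),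
          ENNReal.ofReal_rpow_of_pos ha, ENNReal.ofReal_rpow_of_pos hb]

section Haar

variable {E : Type*} [NormedAddCommGroup E] [NormedSpace ℝ E] [MeasurableSpace E] [BorelSpace E]
  [FiniteDimensional ℝ E] (μ : Measure E) [μ.IsAddHaarMeasure]

theorem lintegral_comp_smul_of_pos {g : E → ℝ≥0∞} (hg : Measurable g) {t : ℝ} (ht : 0 < t) :
    ∫⁻ x, g (t • x) ∂μ = ENNReal.ofReal ((t ^ finrank ℝ E)⁻¹) * ∫⁻ x, g x ∂μ := by
  rw [← lintegral_map hg (measurable_const_smul t), Measure.map_addHaar_smul μ ht.ne',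
    lintegral_smul_measure, smul_eq_mul, abs_of_pos (by positivity)]

theorem lintegral_max_one_enorm_rpow_neg_lt_top {s : ℝ} (hs : finrank ℝ E < s) :
    ∫⁻ x, max 1 ‖x‖ₑ ^ (-s) ∂μ < ∞ := by
  have hs0 : 0 < s := (Nat.cast_nonneg _).trans_lt hs
  have hle : ∀ x : E,
      max 1 ‖x‖ₑ ^ (-s) ≤ ENNReal.ofReal (2 ^ s) * ENNReal.ofReal ((1 + ‖x‖) ^ (-s)) := by
    intro x
    rw [← ofReal_norm, ← ENNReal.ofReal_one, ← ENNReal.ofReal_max,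
      ENNReal.ofReal_rpow_of_pos (by positivity), ← ENNReal.ofReal_mul (by positivity)]
    apply ENNReal.ofReal_le_ofReal
    calc max 1 ‖x‖ ^ (-s) ≤ ((1 + ‖x‖) / 2) ^ (-s) :=
          Real.rpow_le_rpow_of_nonpos (by positivity)
            (by linarith [le_max_left 1 ‖x‖, le_max_right 1 ‖x‖]) (by linarith)
      _ = 2 ^ s * (1 + ‖x‖) ^ (-s) := by
          rw [Real.div_rpow (by positivity) zero_le_two, Real.rpow_neg zero_le_two, div_inv_eq_mul,
            mul_comm]
  calc ∫⁻ x, max 1 ‖x‖ₑ ^ (-s) ∂μ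
      ≤ ∫⁻ x, ENNReal.ofReal (2 ^ s) * ENNReal.ofReal ((1 + ‖x‖) ^ (-s)) ∂μ := lintegral_mono hle
    _ = ENNReal.ofReal (2 ^ s) * ∫⁻ x, ENNReal.ofReal ((1 + ‖x‖) ^ (-s)) ∂μ :=
        lintegral_const_mul _ (by fun_prop)
    _ < ∞ := mul_lt_top ofReal_lt_top (finite_integral_one_add_norm hs)

theorem lintegral_eq_zero_of_lintegral_enorm_rpow_mul_eq_zero [Nontrivial E] {lam : ℝ}
    {f : E → ℝ≥0∞} (hf : AEMeasurable f μ) (h : ∫⁻ x, ‖x‖ₑ ^ lam * f x ∂μ = 0) :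
    ∫⁻ x, f x ∂μ = 0 := by
  rw [lintegral_eq_zero_iff' (by fun_prop)] at h
  rw [lintegral_eq_zero_iff' hf]
  filter_upwards [h, μ.ae_ne 0] with x hx hx0
  have : ‖x‖ₑ ^ lam ≠ 0 := by simp [hx0]
  simpa [this] using hx

theorem lintegral_rpow_le_mass_add_moment {lam q t : ℝ} (hlam : 0 < lam) (hq0 : 0 < q) (hq1 : q < 1)
    {f : E → ℝ≥0∞} (hf : AEMeasurable f μ) (ht : 0 < t) :
    ∫⁻ x, f x ^ q ∂μ ≤
      (∫⁻ x, f x ∂μ + ENNReal.ofReal (t ^ lam) * ∫⁻ x, ‖x‖ₑ ^ lam * f x ∂μ) ^ q *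
        (ENNReal.ofReal ((t ^ finrank ℝ E)⁻¹) *
          ∫⁻ x, max 1 ‖x‖ₑ ^ (-(lam * q / (1 - q))) ∂μ) ^ (1 - q) := by
  have hweight : ∀ x : E, max 1 ‖t • x‖ₑ ^ lam ≤ 1 + ENNReal.ofReal (t ^ lam) * ‖x‖ₑ ^ lam := by
    intro x
    rw [enorm_smul, Real.enorm_of_nonneg ht.le, ← ENNReal.ofReal_rpow_of_nonneg ht.le hlam.le,
      ← ENNReal.mul_rpow_of_nonneg _ _ hlam.le]
    rcases max_cases 1 (ENNReal.ofReal t * ‖x‖ₑ) with ⟨h, -⟩ | ⟨h, -⟩ <;> rw [h]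
    · exact (ENNReal.one_rpow lam).trans_le le_self_add
    · exact le_add_self
  have hmoment : ∫⁻ x, f x * max 1 ‖t • x‖ₑ ^ lam ∂μ ≤
      ∫⁻ x, f x ∂μ + ENNReal.ofReal (t ^ lam) * ∫⁻ x, ‖x‖ₑ ^ lam * f x ∂μ :=
    calc ∫⁻ x, f x * max 1 ‖t • x‖ₑ ^ lam ∂μ
        ≤ ∫⁻ x, f x + ENNReal.ofReal (t ^ lam) * (‖x‖ₑ ^ lam * f x) ∂μ := by
          refine lintegral_mono fun x => ?_
          calc f x * max 1 ‖t • x‖ₑ ^ lam ≤ f x * (1 + ENNReal.ofReal (t ^ lam) * ‖x‖ₑ ^ lam) := by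
                gcongr; exact hweight x
            _ = _ := by ring
      _ = _ := by rw [lintegral_add_left' hf, lintegral_const_mul' _ _ ofReal_ne_top]
  have hscale : ∫⁻ x, (max 1 ‖t • x‖ₑ ^ lam) ^ (-(q / (1 - q))) ∂μ =
      ENNReal.ofReal ((t ^ finrank ℝ E)⁻¹) * ∫⁻ x, max 1 ‖x‖ₑ ^ (-(lam * q / (1 - q))) ∂μ := by
    simp_rw [← ENNReal.rpow_mul, mul_neg, mul_div_assoc]
    exact lintegral_comp_smul_of_pos μ (g := fun y => max 1 ‖y‖ₑ ^ (-(lam * (q / (1 - q)))))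
      (by fun_prop) ht
  calc ∫⁻ x, f x ^ q ∂μ ≤ (∫⁻ x, f x * max 1 ‖t • x‖ₑ ^ lam ∂μ) ^ q *
        (∫⁻ x, (max 1 ‖t • x‖ₑ ^ lam) ^ (-(q / (1 - q))) ∂μ) ^ (1 - q) :=
      lintegral_rpow_le_lintegral_mul_weight hq0 hq1 hf (by fun_prop)
        (fun x => by simp [ENNReal.rpow_eq_zero_iff, hlam])
        (fun x => by simp [ENNReal.rpow_eq_top_iff])
    _ ≤ _ := by rw [hscale]; gcongr

theorem lintegral_max_one_enorm_rpow_ne_zero (s : ℝ) : ∫⁻ x, max 1 ‖x‖ₑ ^ (-s) ∂μ ≠ 0 := by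
  rw [Ne, lintegral_eq_zero_iff (by fun_prop)]
  intro h
  obtain ⟨x, hx⟩ := h.exists
  simp [ENNReal.rpow_eq_zero_iff] at hx

theorem lintegral_rpow_one_div_le [Nontrivial E] {lam q : ℝ} (hlam : 0 < lam) (hq0 : 0 < q)
    (hq1 : q < 1) (hdq : finrank ℝ E * (1 - q) < lam * q) {f : E → ℝ≥0∞}
    (hf : AEMeasurable f μ) :
    (∫⁻ x, f x ^ q ∂μ) ^ (1 / q) ≤
      2 * (∫⁻ x, max 1 ‖x‖ₑ ^ (-(lam * q / (1 - q))) ∂μ) ^ ((1 - q) / q) *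
        ((∫⁻ x, f x ∂μ) ^ (1 - finrank ℝ E * (1 - q) / (lam * q)) *
          (∫⁻ x, ‖x‖ₑ ^ lam * f x ∂μ) ^ (finrank ℝ E * (1 - q) / (lam * q))) := by
  set θ := finrank ℝ E * (1 - q) / (lam * q)
  have hθ0 : 0 < θ := by have := finrank_pos (R := ℝ) (M := E); positivity
  have hθ1 : θ < 1 := (div_lt_one (by positivity)).2 hdq
  have hK0 : 2 * (∫⁻ x, max 1 ‖x‖ₑ ^ (-(lam * q / (1 - q))) ∂μ) ^ ((1 - q) / q) ≠ 0 := by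
    simp [ENNReal.rpow_eq_zero_iff, lintegral_max_one_enorm_rpow_ne_zero,
      (lintegral_max_one_enorm_rpow_neg_lt_top μ ((lt_div_iff₀ (by linarith)).2 hdq)).ne]
  by_cases hm0 : ∫⁻ x, f x ∂μ = 0
  · simp [lintegral_rpow_eq_zero_of_lintegral_eq_zero hq0 hf hm0, hq0]
  have he0 : ∫⁻ x, ‖x‖ₑ ^ lam * f x ∂μ ≠ 0 :=
    fun h => hm0 (lintegral_eq_zero_of_lintegral_enorm_rpow_mul_eq_zero μ hf h)
  by_cases hmt : ∫⁻ x, f x ∂μ = ∞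
  · have : (∫⁻ x, ‖x‖ₑ ^ lam * f x ∂μ) ^ θ ≠ 0 := by simp [rpow_eq_zero_iff, he0, hθ0.le]
    rw [hmt, top_rpow_of_pos (by linarith), top_mul this, mul_top hK0]
    exact le_top
  by_cases het : ∫⁻ x, ‖x‖ₑ ^ lam * f x ∂μ = ∞
  · have : (∫⁻ x, f x ∂μ) ^ (1 - θ) ≠ 0 := by simp [rpow_eq_zero_iff, hm0, hθ1.le]
    rw [het, top_rpow_of_pos hθ0, mul_top this, mul_top hK0]
    exact le_top
  exact rpow_one_div_le_of_forall_scale hlam hq0 hq1 hm0 hmt he0 het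
    fun t ht => lintegral_rpow_le_mass_add_moment μ hlam hq0 hq1 hf ht

theorem exists_pos_mul_lintegral_rpow_le [Nontrivial E] {lam q : ℝ} (hlam : 0 < lam) (hq0 : 0 < q)
    (hq1 : q < 1) (hdq : finrank ℝ E * (1 - q) < lam * q) :
    ∃ c : ℝ, 0 < c ∧ ∀ f : E → ℝ≥0∞, AEMeasurable f μ →
      ENNReal.ofReal c * (∫⁻ x, f x ^ q ∂μ) ^ (1 / q) ≤
        (∫⁻ x, f x ∂μ) ^ (1 - finrank ℝ E * (1 - q) / (lam * q)) *
          (∫⁻ x, ‖x‖ₑ ^ lam * f x ∂μ) ^ (finrank ℝ E * (1 - q) / (lam * q)) := by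
  set J := ∫⁻ x, max 1 ‖x‖ₑ ^ (-(lam * q / (1 - q))) ∂μ
  have hJt : J ≠ ∞ :=
    (lintegral_max_one_enorm_rpow_neg_lt_top μ ((lt_div_iff₀ (by linarith)).2 hdq)).ne
  set K := 2 * J ^ ((1 - q) / q)
  have hK0 : K ≠ 0 := by
    simp [K, ENNReal.rpow_eq_zero_iff, lintegral_max_one_enorm_rpow_ne_zero, J, hJt]
  have hKt : K ≠ ∞ :=
    mul_ne_top ofNat_ne_top (rpow_ne_top_of_nonneg (div_nonneg (by linarith) hq0.le) hJt)
  refine ⟨K.toReal⁻¹, inv_pos.2 (toReal_pos hK0 hKt), fun f hf => ?_⟩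
  calc _ ≤ ENNReal.ofReal K.toReal⁻¹ * (K * _) :=
        by gcongr; exact lintegral_rpow_one_div_le μ hlam hq0 hq1 hdq hf
    _ = _ := by
        rw [← mul_assoc, ofReal_inv_of_pos (toReal_pos hK0 hKt), ofReal_toReal hKt,
          ENNReal.inv_mul_cancel hK0 hKt, one_mul]

end Haar

/-- Lemma 4: for `N/(N+λ) < q < 1` and `θ = N(1-q)/(λq)`, there is
`c > 0` with `(∫ρ)^{1-θ} (∫|x|^λρ)^θ ≥ c (∫ρ^q)^{1/q}` for all measurable `ρ ≥ 0`. -/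
theorem stmt4 (N : ℕ) (hN : 1 ≤ N) (lam q : ℝ) (hlam : 0 < lam)
    (hq : (N : ℝ) / ((N : ℝ) + lam) < q) (hq1 : q < 1) :
    ∃ c : ℝ, 0 < c ∧ ∀ ρ : RHLS.Space N → ℝ, Measurable ρ → 0 ≤ ρ →
      ENNReal.ofReal c * RHLS.qnorm N q ρ ^ (1 / q) ≤
        RHLS.mass N ρ ^ (1 - (N : ℝ) * (1 - q) / (lam * q)) *
          RHLS.mom N lam ρ ^ ((N : ℝ) * (1 - q) / (lam * q)) := by
  have hq0 : 0 < q := lt_of_le_of_lt (by positivity) hq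
  have hdq : (finrank ℝ (RHLS.Space N) : ℝ) * (1 - q) < lam * q := by
    rw [finrank_euclideanSpace_fin]
    have := (div_lt_iff₀ (by positivity)).1 hq
    linarith
  have : Nontrivial (RHLS.Space N) :=
    Module.nontrivial_of_finrank_pos (by rw [finrank_euclideanSpace_fin]; omega)
  obtain ⟨c, hc, hineq⟩ := exists_pos_mul_lintegral_rpow_le volume hlam hq0 hq1 hdq
  refine ⟨c, hc, fun ρ hρ hρ0 => ?_⟩
  have hqnorm : RHLS.qnorm N q ρ = ∫⁻ x, ENNReal.ofReal (ρ x) ^ q :=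
    lintegral_congr fun x => (ofReal_rpow_of_nonneg (hρ0 x) hq0.le).symm
  have hmom : RHLS.mom N lam ρ = ∫⁻ x, ‖x‖ₑ ^ lam * ENNReal.ofReal (ρ x) :=
    lintegral_congr fun x => by
      rw [ofReal_mul (by positivity), ← ofReal_rpow_of_nonneg (norm_nonneg x) hlam.le, ofReal_norm]
  rw [hqnorm, hmom, RHLS.mass]
  simpa only [finrank_euclideanSpace_fin] using hineq _ hρ.ennreal_ofReal.aemeasurable
end
end

section
/- Let N ≥ 1 be an integer. The map (λ, q) ↦ C_{N,λ,q} is upper semi-continuous on (0,∞) × (0,1): if (λ_n, q_n) → (λ, q) in (0,∞) × (0,1), then limsup_{n→∞} C_{N,λ_n,q_n} ≤ C_{N,λ,q}. -/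
open MeasureTheory ENNReal Filter Topology

noncomputable section

/-!
Since `C` is an infimum, it suffices to bound the `limsup` by the quotient `Q_{λ,q}[ρ]` of each
admissible `ρ`. If `ρ` vanishes outside a ball, `|x - y|^λ'` stays bounded on its support for `λ'`
near `λ` and `ρ^{q'} ≤ 1 + ρ` there for `q' ≤ 1`, so dominated convergence makes
`(λ', q') ↦ Q_{λ',q'}[ρ]` continuous at `(λ, q)`, whence `limsup C ≤ Q_{λ,q}[ρ]`. A general `ρ`
is replaced by its restrictions `σ_k` to the balls of radius `k`: `I_λ[σ_k] ≤ I_λ[ρ]`, while the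
denominators of `σ_k` converge to that of `ρ` by monotone convergence, so
`Q_{λ,q}[σ_k] ≤ I_λ[ρ] / denom(σ_k) → Q_{λ,q}[ρ]`.
-/

theorem ENNReal.tendsto_rpow_of_ne_zero_of_ne_top {ι : Type*} {l : Filter ι} {a : ι → ℝ≥0∞}
    {s : ι → ℝ} {a₀ : ℝ≥0∞} {s₀ : ℝ} (ha : Tendsto a l (𝓝 a₀)) (hs : Tendsto s l (𝓝 s₀))
    (ha₀ : a₀ ≠ 0) (ha₀' : a₀ ≠ ⊤) : Tendsto (fun i => a i ^ s i) l (𝓝 (a₀ ^ s₀)) := by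
  have hnn := ((ENNReal.tendsto_toNNReal ha₀').comp ha).nnrpow hs
    (Or.inl (ENNReal.toNNReal_ne_zero.mpr ⟨ha₀, ha₀'⟩))
  have hcoe := (ENNReal.continuous_coe.tendsto _).comp hnn
  rw [Function.comp_def, ENNReal.coe_rpow_of_ne_zero (ENNReal.toNNReal_ne_zero.mpr ⟨ha₀, ha₀'⟩),
    ENNReal.coe_toNNReal ha₀'] at hcoe
  refine hcoe.congr' ?_
  filter_upwards [ha.eventually_ne ha₀, ha.eventually_ne ha₀'] with i hi hi'
  simp only [Function.comp_apply]
  rw [ENNReal.coe_rpow_of_ne_zero (ENNReal.toNNReal_ne_zero.mpr ⟨hi, hi'⟩),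
    ENNReal.coe_toNNReal hi']

theorem Real.rpow_le_one_add_rpow {b c p L : ℝ} (hb : 0 ≤ b) (hbc : b ≤ c) (hp : 0 ≤ p)
    (hpL : p ≤ L) : b ^ p ≤ (1 + c) ^ L :=
  (Real.rpow_le_rpow hb (by linarith) hp).trans
    (Real.rpow_le_rpow_of_exponent_le (by linarith) hpL)

theorem MeasureTheory.tendsto_lintegral_indicator_closedBall_nat {X : Type*}
    [PseudoMetricSpace X] [MeasurableSpace X] [OpensMeasurableSpace X] (μ : Measure X) (x₀ : X)
    (f : X → ℝ≥0∞) :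
    Tendsto (fun k : ℕ => ∫⁻ x in Metric.closedBall x₀ k, f x ∂μ) atTop (𝓝 (∫⁻ x, f x ∂μ)) := by
  have hmono : Monotone fun k : ℕ => Metric.closedBall x₀ k := fun j k hjk =>
    Metric.closedBall_subset_closedBall (Nat.cast_le.mpr hjk)
  have h := tendsto_measure_iUnion_atTop (μ := μ.withDensity f) hmono
  rw [Metric.iUnion_closedBall_nat, withDensity_apply _ MeasurableSet.univ,
    Measure.restrict_univ] at h
  simpa only [Function.comp_def, withDensity_apply _ measurableSet_closedBall] using h

namespace RHLS

variable {N : ℕ}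

theorem qnorm_one (ρ : Space N → ℝ) : qnorm N 1 ρ = mass N ρ := by
  simp only [qnorm, mass, Real.rpow_one]

theorem qnorm_eq_zero_iff {q : ℝ} {ρ : Space N → ℝ} (hq : 0 < q) (hρ : Measurable ρ)
    (h0 : 0 ≤ ρ) : qnorm N q ρ = 0 ↔ ρ =ᵐ[volume] 0 := by
  rw [qnorm, lintegral_eq_zero_iff (hρ.pow_const q).ennreal_ofReal]
  refine eventually_congr (Eventually.of_forall fun x => ?_)
  simp only [Pi.zero_apply, ENNReal.ofReal_eq_zero]
  constructor
  · intro hx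
    by_contra hne
    exact (Real.rpow_pos_of_pos (lt_of_le_of_ne (h0 x) (Ne.symm hne)) q).not_ge hx
  · intro hx
    rw [hx, Real.zero_rpow hq.ne']

theorem mass_eq_zero_iff {ρ : Space N → ℝ} (hρ : Measurable ρ) (h0 : 0 ≤ ρ) :
    mass N ρ = 0 ↔ ρ =ᵐ[volume] 0 := by
  rw [← qnorm_one]
  exact qnorm_eq_zero_iff one_pos hρ h0

theorem I_mono {lam : ℝ} {σ ρ : Space N → ℝ} (h : σ ≤ ρ) : I N lam σ ≤ I N lam ρ :=
  lintegral_mono fun x => lintegral_mono fun y =>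
    mul_le_mul' (mul_le_mul' (ENNReal.ofReal_le_ofReal (h x)) le_rfl)
      (ENNReal.ofReal_le_ofReal (h y))

theorem I_eq_lintegral_prod {lam : ℝ} {ρ : Space N → ℝ} (hρ : Measurable ρ) :
    I N lam ρ = ∫⁻ z : Space N × Space N,
      ENNReal.ofReal (ρ z.1) * ENNReal.ofReal (‖z.1 - z.2‖ ^ lam) * ENNReal.ofReal (ρ z.2) := by
  rw [Measure.volume_eq_prod, lintegral_prod _ (by fun_prop)]
  rfl

namespace Adm

variable {q : ℝ} {ρ : Space N → ℝ}

theorem mass_ne_zero_s18 (hρ : Adm N q ρ) : mass N ρ ≠ 0 :=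
  fun h => hρ.2.2.2.2 ((mass_eq_zero_iff hρ.1 hρ.2.1).mp h)

theorem qnorm_ne_zero_s18 (hρ : Adm N q ρ) (hq : 0 < q) : qnorm N q ρ ≠ 0 :=
  fun h => hρ.2.2.2.2 ((qnorm_eq_zero_iff hq hρ.1 hρ.2.1).mp h)

theorem denom_ne_zero_s18 {lam : ℝ} (hρ : Adm N q ρ) (hq : 0 < q) : denom N lam q ρ ≠ 0 :=
  mul_ne_zero (ENNReal.rpow_pos (pos_iff_ne_zero.mpr hρ.mass_ne_zero_s18) hρ.2.2.1.ne).ne'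
    (ENNReal.rpow_pos (pos_iff_ne_zero.mpr (hρ.qnorm_ne_zero_s18 hq)) hρ.2.2.2.1.ne).ne'

theorem denom_ne_top_s18 {lam : ℝ} (hρ : Adm N q ρ) (hq : 0 < q) : denom N lam q ρ ≠ ⊤ :=
  ENNReal.mul_ne_top (ENNReal.rpow_ne_top_of_ne_zero hρ.mass_ne_zero_s18 hρ.2.2.1.ne)
    (ENNReal.rpow_ne_top_of_ne_zero (hρ.qnorm_ne_zero_s18 hq) hρ.2.2.2.1.ne)

end Adm

theorem continuousAt_alpha {lam q : ℝ} (hq : q ≠ 1) :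
    ContinuousAt (fun p : ℝ × ℝ => alpha N p.1 p.2) (lam, q) := by
  rcases eq_or_ne N 0 with rfl | hN
  · simp only [alpha, Nat.cast_zero, zero_mul, _root_.div_zero]
    exact continuousAt_const
  · have hden : (N : ℝ) * (1 - q) ≠ 0 :=
      mul_ne_zero (Nat.cast_ne_zero.mpr hN) (sub_ne_zero.mpr hq.symm)
    unfold alpha
    fun_prop (disch := exact hden)

theorem tendsto_denom {ι : Type*} {l : Filter ι} {ρ : ι → Space N → ℝ} {lam q : ι → ℝ}
    {ρ₀ : Space N → ℝ} {lam₀ q₀ : ℝ} (hρ₀ : Adm N q₀ ρ₀) (hq₀ : 0 < q₀) (hq₀1 : q₀ ≠ 1)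
    (hmass : Tendsto (fun i => mass N (ρ i)) l (𝓝 (mass N ρ₀)))
    (hqnorm : Tendsto (fun i => qnorm N (q i) (ρ i)) l (𝓝 (qnorm N q₀ ρ₀)))
    (hlam : Tendsto lam l (𝓝 lam₀)) (hq : Tendsto q l (𝓝 q₀)) :
    Tendsto (fun i => denom N (lam i) (q i) (ρ i)) l (𝓝 (denom N lam₀ q₀ ρ₀)) := by
  have hα : Tendsto (fun i => alpha N (lam i) (q i)) l (𝓝 (alpha N lam₀ q₀)) :=
    (continuousAt_alpha hq₀1).tendsto.comp (hlam.prodMk_nhds hq)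
  exact ENNReal.Tendsto.mul
    (ENNReal.tendsto_rpow_of_ne_zero_of_ne_top hmass hα hρ₀.mass_ne_zero_s18 hρ₀.2.2.1.ne)
    (Or.inr (ENNReal.rpow_ne_top_of_ne_zero (hρ₀.qnorm_ne_zero_s18 hq₀) hρ₀.2.2.2.1.ne))
    (ENNReal.tendsto_rpow_of_ne_zero_of_ne_top hqnorm ((tendsto_const_nhds.sub hα).div hq hq₀.ne')
      (hρ₀.qnorm_ne_zero_s18 hq₀) hρ₀.2.2.2.1.ne)
    (Or.inr (ENNReal.rpow_ne_top_of_ne_zero hρ₀.mass_ne_zero_s18 hρ₀.2.2.1.ne))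

section SupportSubsetClosedBall

variable {ρ : Space N → ℝ} {R : ℝ}

theorem ofReal_rpow_le_indicator_add (h0 : 0 ≤ ρ)
    (hsupp : Function.support ρ ⊆ Metric.closedBall 0 R) {p : ℝ} (hp0 : 0 < p) (hp1 : p ≤ 1)
    (x : Space N) :
    ENNReal.ofReal (ρ x ^ p) ≤ (Metric.closedBall 0 R).indicator 1 x + ENNReal.ofReal (ρ x) := by
  by_cases hx : x ∈ Metric.closedBall (0 : Space N) R
  · rw [Set.indicator_of_mem hx, Pi.one_apply, ← ENNReal.ofReal_one,
      ← ENNReal.ofReal_add zero_le_one (h0 x)]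
    refine ENNReal.ofReal_le_ofReal ?_
    simpa using Real.rpow_le_one_add_rpow (h0 x) le_rfl hp0.le hp1
  · have : ρ x = 0 := Function.notMem_support.mp fun h => hx (hsupp h)
    simp [this, Real.zero_rpow hp0.ne']

theorem lintegral_indicator_closedBall_add_ne_top (hmass : mass N ρ < ⊤) :
    ∫⁻ x, ((Metric.closedBall (0 : Space N) R).indicator 1 x + ENNReal.ofReal (ρ x)) ≠ ⊤ := by
  rw [lintegral_add_left (measurable_one.indicator measurableSet_closedBall),
    lintegral_indicator_one measurableSet_closedBall]
  exact ENNReal.add_ne_top.mpr ⟨measure_closedBall_lt_top.ne, hmass.ne⟩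

theorem qnorm_lt_top_of_support_subset (h0 : 0 ≤ ρ)
    (hsupp : Function.support ρ ⊆ Metric.closedBall 0 R) (hmass : mass N ρ < ⊤) {p : ℝ}
    (hp0 : 0 < p) (hp1 : p ≤ 1) : qnorm N p ρ < ⊤ :=
  (lintegral_mono (ofReal_rpow_le_indicator_add h0 hsupp hp0 hp1)).trans_lt
    (lintegral_indicator_closedBall_add_ne_top hmass).lt_top

theorem tendsto_qnorm_of_support_subset (hρ : Measurable ρ) (h0 : 0 ≤ ρ)
    (hsupp : Function.support ρ ⊆ Metric.closedBall 0 R) (hmass : mass N ρ < ⊤)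
    {ι : Type*} {l : Filter ι} [l.IsCountablyGenerated] {v : ι → ℝ} {q : ℝ} (hq0 : 0 < q)
    (hq1 : q < 1) (hv : Tendsto v l (𝓝 q)) :
    Tendsto (fun i => qnorm N (v i) ρ) l (𝓝 (qnorm N q ρ)) := by
  refine tendsto_lintegral_filter_of_dominated_convergence _
    (Eventually.of_forall fun i => (hρ.pow_const _).ennreal_ofReal) ?_
    (lintegral_indicator_closedBall_add_ne_top (R := R) hmass)
    (ae_of_all _ fun x => ENNReal.tendsto_ofReal (tendsto_const_nhds.rpow hv (Or.inr hq0)))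
  filter_upwards [hv.eventually (lt_mem_nhds hq0), hv.eventually (gt_mem_nhds hq1)]
    with i hi0 hi1
  exact ae_of_all _ (ofReal_rpow_le_indicator_add h0 hsupp hi0 hi1.le)

theorem interaction_le_of_support_subset (hsupp : Function.support ρ ⊆ Metric.closedBall 0 R)
    {p L : ℝ} (hp : 0 ≤ p) (hpL : p ≤ L) (z : Space N × Space N) :
    ENNReal.ofReal (ρ z.1) * ENNReal.ofReal (‖z.1 - z.2‖ ^ p) * ENNReal.ofReal (ρ z.2) ≤
      ENNReal.ofReal (ρ z.1) * ENNReal.ofReal ((1 + 2 * R) ^ L) * ENNReal.ofReal (ρ z.2) := by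
  by_cases h1 : ρ z.1 = 0
  · simp [h1]
  by_cases h2 : ρ z.2 = 0
  · simp [h2]
  have hx := mem_closedBall_zero_iff.mp (hsupp h1)
  have hy := mem_closedBall_zero_iff.mp (hsupp h2)
  gcongr
  exact Real.rpow_le_one_add_rpow (norm_nonneg _) ((norm_sub_le _ _).trans (by linarith)) hp hpL

theorem tendsto_I_of_support_subset (hρ : Measurable ρ)
    (hsupp : Function.support ρ ⊆ Metric.closedBall 0 R) (hmass : mass N ρ < ⊤)
    {ι : Type*} {l : Filter ι} [l.IsCountablyGenerated] {u : ι → ℝ} {lam : ℝ} (hlam : 0 < lam)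
    (hu : Tendsto u l (𝓝 lam)) :
    Tendsto (fun i => I N (u i) ρ) l (𝓝 (I N lam ρ)) := by
  simp only [I_eq_lintegral_prod hρ]
  refine tendsto_lintegral_filter_of_dominated_convergence
    (fun z => ENNReal.ofReal (ρ z.1) * ENNReal.ofReal ((1 + 2 * R) ^ (lam + 1)) *
      ENNReal.ofReal (ρ z.2)) (Eventually.of_forall fun i => by fun_prop) ?_ ?_
    (ae_of_all _ fun z => ENNReal.Tendsto.mul_const (ENNReal.Tendsto.const_mul
      (ENNReal.tendsto_ofReal (tendsto_const_nhds.rpow hu (Or.inr hlam)))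
      (Or.inr ENNReal.ofReal_ne_top)) (Or.inr ENNReal.ofReal_ne_top))
  · filter_upwards [hu.eventually (lt_mem_nhds hlam), hu.eventually (gt_mem_nhds (lt_add_one lam))]
      with i hi0 hi1
    exact ae_of_all _ (interaction_le_of_support_subset hsupp hi0.le hi1.le)
  · rw [Measure.volume_eq_prod, lintegral_prod_mul
      (f := fun x => ENNReal.ofReal (ρ x) * ENNReal.ofReal ((1 + 2 * R) ^ (lam + 1)))
      (g := fun y => ENNReal.ofReal (ρ y)) (by fun_prop) (by fun_prop),
      lintegral_mul_const _ (by fun_prop)]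
    exact ENNReal.mul_ne_top (ENNReal.mul_ne_top hmass.ne ENNReal.ofReal_ne_top) hmass.ne

end SupportSubsetClosedBall

variable {ι : Type*} {l : Filter ι} {u v : ι → ℝ} {lam q : ℝ} {ρ : Space N → ℝ} {R : ℝ}

theorem tendsto_Qfun_of_support_subset [l.IsCountablyGenerated] (hρ : Adm N q ρ)
    (hsupp : Function.support ρ ⊆ Metric.closedBall 0 R) (hlam : 0 < lam) (hq0 : 0 < q)
    (hq1 : q < 1) (hu : Tendsto u l (𝓝 lam)) (hv : Tendsto v l (𝓝 q)) :
    Tendsto (fun i => Qfun N (u i) (v i) ρ) l (𝓝 (Qfun N lam q ρ)) :=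
  ENNReal.Tendsto.div (tendsto_I_of_support_subset hρ.1 hsupp hρ.2.2.1 hlam hu)
    (Or.inr (hρ.denom_ne_zero_s18 hq0))
    (tendsto_denom hρ hq0 hq1.ne tendsto_const_nhds
      (tendsto_qnorm_of_support_subset hρ.1 hρ.2.1 hsupp hρ.2.2.1 hq0 hq1 hv) hu hv)
    (Or.inl (hρ.denom_ne_top_s18 hq0))

theorem limsup_C_le_Qfun_of_support_subset [l.NeBot] [l.IsCountablyGenerated] (hρ : Adm N q ρ)
    (hsupp : Function.support ρ ⊆ Metric.closedBall 0 R) (hlam : 0 < lam) (hq0 : 0 < q)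
    (hq1 : q < 1) (hu : Tendsto u l (𝓝 lam)) (hv : Tendsto v l (𝓝 q)) :
    limsup (fun i => C N (u i) (v i)) l ≤ Qfun N lam q ρ := by
  have hC : ∀ᶠ i in l, C N (u i) (v i) ≤ Qfun N (u i) (v i) ρ := by
    filter_upwards [hv.eventually (lt_mem_nhds hq0), hv.eventually (gt_mem_nhds hq1)]
      with i hi0 hi1
    exact sInf_le ⟨ρ, ⟨hρ.1, hρ.2.1, hρ.2.2.1,
      qnorm_lt_top_of_support_subset hρ.2.1 hsupp hρ.2.2.1 hi0 hi1.le, hρ.2.2.2.2⟩, rfl⟩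
  calc limsup (fun i => C N (u i) (v i)) l
      ≤ limsup (fun i => Qfun N (u i) (v i) ρ) l := limsup_le_limsup hC
    _ = Qfun N lam q ρ :=
      (tendsto_Qfun_of_support_subset hρ hsupp hlam hq0 hq1 hu hv).limsup_eq

theorem qnorm_indicator (hq : 0 < q) (ρ : Space N → ℝ) {s : Set (Space N)}
    (hs : MeasurableSet s) : qnorm N q (s.indicator ρ) = ∫⁻ x in s, ENNReal.ofReal (ρ x ^ q) := by
  rw [qnorm, ← lintegral_indicator hs]
  refine lintegral_congr fun x => ?_
  by_cases hx : x ∈ s <;> simp [hx, Real.zero_rpow hq.ne']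

theorem mass_indicator (ρ : Space N → ℝ) {s : Set (Space N)} (hs : MeasurableSet s) :
    mass N (s.indicator ρ) = ∫⁻ x in s, ENNReal.ofReal (ρ x) := by
  simpa only [qnorm_one, Real.rpow_one] using qnorm_indicator one_pos ρ hs

theorem tendsto_qnorm_indicator_closedBall (hq : 0 < q) (ρ : Space N → ℝ) :
    Tendsto (fun k : ℕ => qnorm N q ((Metric.closedBall 0 k).indicator ρ)) atTop
      (𝓝 (qnorm N q ρ)) := by
  simp only [qnorm_indicator hq ρ measurableSet_closedBall]
  exact tendsto_lintegral_indicator_closedBall_nat volume 0 _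

theorem tendsto_mass_indicator_closedBall (ρ : Space N → ℝ) :
    Tendsto (fun k : ℕ => mass N ((Metric.closedBall 0 k).indicator ρ)) atTop
      (𝓝 (mass N ρ)) := by
  simpa only [qnorm_one] using tendsto_qnorm_indicator_closedBall one_pos ρ

theorem Adm.eventually_indicator_closedBall (hρ : Adm N q ρ) (hq : 0 < q) :
    ∀ᶠ k : ℕ in atTop, Adm N q ((Metric.closedBall 0 k).indicator ρ) := by
  filter_upwards [(tendsto_mass_indicator_closedBall ρ).eventually_ne hρ.mass_ne_zero_s18] with k hk
  have hmeas : Measurable ((Metric.closedBall 0 (k : ℝ)).indicator ρ) :=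
    hρ.1.indicator measurableSet_closedBall
  have h0 : 0 ≤ (Metric.closedBall 0 (k : ℝ)).indicator ρ :=
    Set.indicator_nonneg fun x _ => hρ.2.1 x
  refine ⟨hmeas, h0, ?_, ?_, fun h => hk ((mass_eq_zero_iff hmeas h0).mpr h)⟩
  · rw [mass_indicator ρ measurableSet_closedBall]
    exact (setLIntegral_le_lintegral _ _).trans_lt hρ.2.2.1
  · rw [qnorm_indicator hq ρ measurableSet_closedBall]
    exact (setLIntegral_le_lintegral _ _).trans_lt hρ.2.2.2.1

theorem limsup_C_le_Qfun [l.NeBot] [l.IsCountablyGenerated] (hρ : Adm N q ρ) (hlam : 0 < lam)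
    (hq0 : 0 < q) (hq1 : q < 1) (hu : Tendsto u l (𝓝 lam)) (hv : Tendsto v l (𝓝 q)) :
    limsup (fun i => C N (u i) (v i)) l ≤ Qfun N lam q ρ := by
  set σ : ℕ → Space N → ℝ := fun k => (Metric.closedBall 0 k).indicator ρ
  have hdenom : Tendsto (fun k => denom N lam q (σ k)) atTop (𝓝 (denom N lam q ρ)) :=
    tendsto_denom hρ hq0 hq1.ne (tendsto_mass_indicator_closedBall ρ)
      (tendsto_qnorm_indicator_closedBall hq0 ρ) tendsto_const_nhds tendsto_const_nhds
  have hlim : Tendsto (fun k => I N lam ρ / denom N lam q (σ k)) atTop (𝓝 (Qfun N lam q ρ)) :=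
    ENNReal.Tendsto.const_div hdenom (Or.inl (hρ.denom_ne_top_s18 hq0))
  refine ge_of_tendsto hlim ?_
  filter_upwards [hρ.eventually_indicator_closedBall hq0] with k hk
  calc limsup (fun i => C N (u i) (v i)) l
      ≤ Qfun N lam q (σ k) :=
        limsup_C_le_Qfun_of_support_subset hk Set.support_indicator_subset hlam hq0 hq1 hu hv
    _ ≤ I N lam ρ / denom N lam q (σ k) :=
        ENNReal.div_le_div_right (I_mono (Set.indicator_le_self' fun x _ => hρ.2.1 x)) _

end RHLS

theorem stmt18_general (N : ℕ) (lam q : ℝ) (hlam : 0 < lam)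
    (hq0 : 0 < q) (hq1 : q < 1)
    (u v : ℕ → ℝ)
    (hul : Tendsto u atTop (𝓝 lam)) (hvl : Tendsto v atTop (𝓝 q)) :
    Filter.limsup (fun n => RHLS.C N (u n) (v n)) atTop ≤ RHLS.C N lam q := by
  refine le_sInf ?_
  rintro _ ⟨ρ, hρ, rfl⟩
  exact RHLS.limsup_C_le_Qfun hρ hlam hq0 hq1 hul hvl

/-- the map `(λ, q) ↦ C_{N,λ,q}` is upper semi-continuous on
`(0,∞) × (0,1)`: along any sequence `(λ_n, q_n) → (λ, q)` in `(0,∞) × (0,1)`,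
`limsup C_{N,λ_n,q_n} ≤ C_{N,λ,q}`. -/
theorem stmt18 (N : ℕ) (hN : 1 ≤ N) (lam q : ℝ) (hlam : 0 < lam)
    (hq0 : 0 < q) (hq1 : q < 1)
    (u v : ℕ → ℝ) (hu : ∀ n, 0 < u n) (hv : ∀ n, 0 < v n ∧ v n < 1)
    (hul : Tendsto u atTop (𝓝 lam)) (hvl : Tendsto v atTop (𝓝 q)) :
    Filter.limsup (fun n => RHLS.C N (u n) (v n)) atTop ≤ RHLS.C N lam q :=
  stmt18_general N lam q hlam hq0 hq1 u v hul hvl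
end
end

section
/- Let N ≥ 1 be an integer and λ > 0, and let ρ ≥ 0 be a measurable radially symmetric non-increasing function on ℝ^N. Then for every x ∈ ℝ^N one has ∫_{ℝ^N} |x−y|^λ ρ(y) dy ≥ ∫_{ℝ^N} |y|^λ ρ(y) dy, and consequently I_λ[ρ] ≥ (∫_{ℝ^N} |y|^λ ρ(y) dy) (∫_{ℝ^N} ρ(x) dx). -/
open MeasureTheory ENNReal Filter Topology

noncomputable section

/-!
Fix `x` and reflect through `x / 2` by `y ↦ x - y`, which preserves Lebesgue measure. Averaging
each of the two integrals with its reflection pairs the points `y` and `x - y`. Of the two,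
the point nearer to the origin carries the smaller kernel `|·|^λ` and the larger density, so
by the two-point rearrangement inequality the kernel centred at the origin gives the smaller
average. Integrating the resulting pointwise bound against `ρ(x) dx` gives the bound on
`I_λ[ρ]`.
-/

open Measure

/-- Unlike `mul_add_mul_le_mul_add_mul`, this needs no cancellation, so it applies to `ℝ≥0∞`. -/
theorem mul_add_mul_le_mul_add_mul_of_canonicallyOrdered {R : Type*} [CommSemiring R]
    [PartialOrder R] [IsOrderedRing R] [CanonicallyOrderedAdd R] {a b c d : R}
    (hab : a ≤ b) (hcd : c ≤ d) : a * d + b * c ≤ a * c + b * d := by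
  obtain ⟨e, rfl⟩ := exists_add_of_le hcd
  calc a * (c + e) + b * c = a * c + b * c + a * e := by ring
    _ ≤ a * c + b * c + b * e := by gcongr
    _ = a * c + b * (c + e) := by ring

theorem Antivary.mul_add_mul_le_mul_add_mul_of_canonicallyOrdered {ι R : Type*} [CommSemiring R]
    [LinearOrder R] [IsOrderedRing R] [CanonicallyOrderedAdd R] {f g : ι → R}
    (h : Antivary f g) (i j : ι) : g i * f i + g j * f j ≤ g i * f j + g j * f i := by
  wlog hij : g i ≤ g j generalizing i j
  · have := this j i (le_of_not_ge hij)
    rwa [add_comm (g j * f j), add_comm (g j * f i)] at this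
  rcases hij.lt_or_eq with hlt | heq
  · exact _root_.mul_add_mul_le_mul_add_mul_of_canonicallyOrdered hij (h hlt)
  · rw [heq, add_comm]

section Reflection

variable {G : Type*} [MeasurableSpace G] [AddCommGroup G] [MeasurableAdd G] [MeasurableNeg G]
  {μ : Measure G} [IsAddLeftInvariant μ] [IsNegInvariant μ]

theorem two_mul_lintegral_eq_lintegral_add_sub_left {F : G → ℝ≥0∞} (hF : Measurable F) (x : G) :
    2 * ∫⁻ y, F y ∂μ = ∫⁻ y, (F y + F (x - y)) ∂μ := by
  rw [lintegral_add_left hF, lintegral_sub_left_eq_self F x, two_mul]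

theorem lintegral_mul_le_lintegral_sub_left_mul {K ρ : G → ℝ≥0∞} (hK : Measurable K)
    (hρ : Measurable ρ) (h : Antivary ρ K) (x : G) :
    ∫⁻ y, K y * ρ y ∂μ ≤ ∫⁻ y, K (x - y) * ρ y ∂μ := by
  have hKx : Measurable fun y => K (x - y) * ρ y :=
    (hK.comp (measurable_const_sub x)).mul hρ
  refine (ENNReal.mul_le_mul_iff_right two_ne_zero ofNat_ne_top).mp ?_
  rw [two_mul_lintegral_eq_lintegral_add_sub_left (F := fun y => K y * ρ y) (hK.mul hρ) x,
    two_mul_lintegral_eq_lintegral_add_sub_left hKx x]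
  refine lintegral_mono fun y => ?_
  rw [sub_sub_cancel x y, add_comm (K (x - y) * ρ y)]
  exact h.mul_add_mul_le_mul_add_mul_of_canonicallyOrdered y (x - y)

end Reflection

theorem RHLS.RadialNonincreasing.antivary_rpow_norm {N : ℕ} {ρ : RHLS.Space N → ℝ}
    (hρ : RHLS.RadialNonincreasing N ρ) {lam : ℝ} (hlam : 0 ≤ lam) :
    Antivary (fun y => ENNReal.ofReal (ρ y))
      fun y : RHLS.Space N => ENNReal.ofReal (‖y‖ ^ lam) := by
  obtain ⟨φ, hφ, hρφ⟩ := hρ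
  intro y z hyz
  have hnorm : ‖y‖ ≤ ‖z‖ := by
    by_contra! hzy
    exact hyz.not_ge (ENNReal.ofReal_le_ofReal (Real.rpow_le_rpow (norm_nonneg z) hzy.le hlam))
  simp only [hρφ]
  exact ENNReal.ofReal_le_ofReal (hφ _ _ (norm_nonneg y) hnorm)

theorem stmt19_general (N : ℕ) (lam : ℝ) (hlam : 0 < lam)
    (ρ : RHLS.Space N → ℝ) (hm : Measurable ρ)
    (hrad : RHLS.RadialNonincreasing N ρ) :
    (∀ x : RHLS.Space N,
      (∫⁻ y, ENNReal.ofReal (‖y‖ ^ lam) * ENNReal.ofReal (ρ y)) ≤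
        ∫⁻ y, ENNReal.ofReal (‖x - y‖ ^ lam) * ENNReal.ofReal (ρ y)) ∧
    RHLS.mom N lam ρ * RHLS.mass N ρ ≤ RHLS.I N lam ρ := by
  have key := lintegral_mul_le_lintegral_sub_left_mul (μ := volume)
    (measurable_norm.pow_const lam).ennreal_ofReal hm.ennreal_ofReal
    (hrad.antivary_rpow_norm hlam.le)
  refine ⟨key, ?_⟩
  have hmom : RHLS.mom N lam ρ = ∫⁻ y, ENNReal.ofReal (‖y‖ ^ lam) * ENNReal.ofReal (ρ y) :=
    lintegral_congr fun y => ENNReal.ofReal_mul (Real.rpow_nonneg (norm_nonneg y) lam)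
  calc RHLS.mom N lam ρ * RHLS.mass N ρ = ∫⁻ x, ENNReal.ofReal (ρ x) * RHLS.mom N lam ρ := by
        rw [RHLS.mass, lintegral_mul_const _ hm.ennreal_ofReal, mul_comm]
    _ ≤ ∫⁻ x, ENNReal.ofReal (ρ x) *
          ∫⁻ y, ENNReal.ofReal (‖x - y‖ ^ lam) * ENNReal.ofReal (ρ y) :=
        lintegral_mono fun x => by rw [hmom]; exact mul_le_mul_right (key x) _
    _ = RHLS.I N lam ρ := by
        simp only [RHLS.I, ← lintegral_const_mul' _ _ ofReal_ne_top, mul_assoc]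

/-- for a radially symmetric non-increasing `ρ ≥ 0` one has
`∫ |x-y|^λ ρ(y) dy ≥ ∫ |y|^λ ρ(y) dy` for every `x`, and consequently
`I_λ[ρ] ≥ (∫|y|^λ ρ(y) dy)(∫ρ dx)`. -/
theorem stmt19 (N : ℕ) (hN : 1 ≤ N) (lam : ℝ) (hlam : 0 < lam)
    (ρ : RHLS.Space N → ℝ) (hm : Measurable ρ) (h0 : 0 ≤ ρ)
    (hrad : RHLS.RadialNonincreasing N ρ) :
    (∀ x : RHLS.Space N,
      (∫⁻ y, ENNReal.ofReal (‖y‖ ^ lam) * ENNReal.ofReal (ρ y)) ≤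
        ∫⁻ y, ENNReal.ofReal (‖x - y‖ ^ lam) * ENNReal.ofReal (ρ y)) ∧
    RHLS.mom N lam ρ * RHLS.mass N ρ ≤ RHLS.I N lam ρ :=
  stmt19_general N lam hlam ρ hm hrad
end
end
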